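/- arXiv:1409.6144 — 12 statements merged into one kernel-verified Lean document; each statement's English description precedes it below -/
import Mathlib

section
/- Two states x, y ∈ [s]^n are joined by an edge in the guessing graph G(D,s) (i.e., no network f ∈ F(D,s) fixes both x and y) if and only if there exists a vertex i such that either (x ≤ᵢ y and x_i > y_i) or (y ≤ᵢ x and y_i > x_i). -/
/-- The order `≤ᵢ` on states determined by the signs of the digraph `D`,
given by the in-neighbourhoods `N⁰(i)`, `N⁺(i)`, `N⁻(i)`. -/
def sle {n s : ℕ} (N0 Np Nm : Fin n → Finset (Fin n)) (i : Fin n)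
    (x y : Fin n → Fin s) : Prop :=
  (∀ j ∈ N0 i, x j = y j) ∧ (∀ j ∈ Np i, x j ≤ y j) ∧ (∀ j ∈ Nm i, y j ≤ x j)

/-- `f ∈ F(D,s)`: each coordinate function is monotone w.r.t. `≤ᵢ`. -/
def memF {n s : ℕ} (N0 Np Nm : Fin n → Finset (Fin n))
    (f : (Fin n → Fin s) → Fin n → Fin s) : Prop :=
  ∀ (i : Fin n) (x y : Fin n → Fin s), sle N0 Np Nm i x y → f x i ≤ f y i

lemma sle_refl {n s : ℕ} (N0 Np Nm : Fin n → Finset (Fin n)) (i : Fin n)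
    (x : Fin n → Fin s) : sle N0 Np Nm i x x :=
  ⟨fun _ _ => rfl, fun _ _ => le_refl _, fun _ _ => le_refl _⟩

lemma sle_trans {n s : ℕ} {N0 Np Nm : Fin n → Finset (Fin n)} {i : Fin n}
    {x y z : Fin n → Fin s} (h1 : sle N0 Np Nm i x y) (h2 : sle N0 Np Nm i y z) :
    sle N0 Np Nm i x z :=
  ⟨fun j hj => (h1.1 j hj).trans (h2.1 j hj),
   fun j hj => (h1.2.1 j hj).trans (h2.2.1 j hj),
   fun j hj => (h2.2.2 j hj).trans (h1.2.2 j hj)⟩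

/-- `x` and `y` are joined by an edge of the guessing graph `G(D,s)`
(no `f ∈ F(D,s)` fixes both) iff some vertex `i` satisfies
(`x ≤ᵢ y` and `x_i > y_i`) or (`y ≤ᵢ x` and `y_i > x_i`). -/
theorem stmt1 (n s : ℕ) (hn : 1 ≤ n) (hs : 2 ≤ s)
    (N0 Np Nm : Fin n → Finset (Fin n))
    (h0p : ∀ i, Disjoint (N0 i) (Np i))
    (h0m : ∀ i, Disjoint (N0 i) (Nm i))
    (hpm : ∀ i, Disjoint (Np i) (Nm i))
    (x y : Fin n → Fin s) :
    (¬ ∃ f : (Fin n → Fin s) → Fin n → Fin s,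
        memF N0 Np Nm f ∧ f x = x ∧ f y = y)
    ↔ ∃ i : Fin n,
        (sle N0 Np Nm i x y ∧ y i < x i) ∨ (sle N0 Np Nm i y x ∧ x i < y i) := by
  classical
  haveI : NeZero s := ⟨by omega⟩
  constructor
  · intro h
    by_contra hc
    push_neg at hc
    apply h
    refine ⟨fun z i => max (if sle N0 Np Nm i x z then x i else 0)
        (if sle N0 Np Nm i y z then y i else 0), ?_, ?_, ?_⟩
    · intro i z w hzw
      apply max_le_max <;> split <;> rename_i hh
      · rw [if_pos (sle_trans hh hzw)]
      · split
        · exact Fin.zero_le _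
        · exact le_refl _
      · rw [if_pos (sle_trans hh hzw)]
      · split
        · exact Fin.zero_le _
        · exact le_refl _
    · funext i
      have h1 : ¬ (sle N0 Np Nm i y x ∧ x i < y i) := fun hh =>
        absurd hh.2 (not_lt.mpr ((hc i).2 hh.1))
      show (if sle N0 Np Nm i x x then x i else 0) ⊔ (if sle N0 Np Nm i y x then y i else 0) = x i
      rw [if_pos (sle_refl N0 Np Nm i x)]
      apply max_eq_left
      split
      · rename_i hh
        by_contra hlt
        exact h1 ⟨hh, lt_of_not_ge hlt⟩
      · exact Fin.zero_le _
    · funext i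
      have h1 : ¬ (sle N0 Np Nm i x y ∧ y i < x i) := fun hh =>
        absurd hh.2 (not_lt.mpr ((hc i).1 hh.1))
      show (if sle N0 Np Nm i x y then x i else 0) ⊔ (if sle N0 Np Nm i y y then y i else 0) = y i
      rw [if_pos (sle_refl N0 Np Nm i y)]
      apply max_eq_right
      split
      · rename_i hh
        by_contra hlt
        exact h1 ⟨hh, lt_of_not_ge hlt⟩
      · exact Fin.zero_le _
  · rintro ⟨i, hi⟩ ⟨f, hf, hfx, hfy⟩
    rcases hi with ⟨hle, hlt⟩ | ⟨hle, hlt⟩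
    · have := hf i x y hle
      rw [hfx, hfy] at this
      exact absurd this (not_le_of_gt hlt)
    · have := hf i y x hle
      rw [hfx, hfy] at this
      exact absurd this (not_le_of_gt hlt)
end

section
/- If a signed digraph D contains no non-negative cycle (every cycle has product of arc signs equal to −1, with all arcs nonzero-signed), then the guessing graph G(D,s) is complete; equivalently, every f ∈ F(D,s) has at most one fixed point. -/
/-- The order `≤ᵢ` determined by the arcs `A` and signs `σ` of a signed digraph. -/
def sleA {n s : ℕ} (A : Fin n → Fin n → Prop) (σ : Fin n → Fin n → ℤ) (i : Fin n)
    (x y : Fin n → Fin s) : Prop :=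
  ∀ j, A j i →
    (σ j i = 0 → x j = y j) ∧ (σ j i = 1 → x j ≤ y j) ∧ (σ j i = -1 → y j ≤ x j)

/-- `f ∈ F(D,s)`: each coordinate function is monotone w.r.t. `≤ᵢ`. -/
def memFA {n s : ℕ} (A : Fin n → Fin n → Prop) (σ : Fin n → Fin n → ℤ)
    (f : (Fin n → Fin s) → Fin n → Fin s) : Prop :=
  ∀ (i : Fin n) (x y : Fin n → Fin s), sleA A σ i x y → f x i ≤ f y i

/-- A non-negative cycle: a (simple) cycle of length `k ≥ 1` whose product of arc
signs is `≥ 0`. -/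
def hasNonnegCycle (n : ℕ) (A : Fin n → Fin n → Prop) (σ : Fin n → Fin n → ℤ) : Prop :=
  ∃ (k : ℕ) (v : ℕ → Fin n), 0 < k ∧ (∀ t, v (t + k) = v t) ∧
    (∀ t, A (v t) (v (t + 1))) ∧
    (∀ t1 t2, t1 < k → t2 < k → v t1 = v t2 → t1 = t2) ∧
    0 ≤ ∏ t ∈ Finset.range k, σ (v t) (v (t + 1))

/-- if a signed digraph contains no non-negative cycle, then the
guessing graph `G(D,s)` is complete: no `f ∈ F(D,s)` fixes two distinct states. -/
theorem stmt2 (n s : ℕ) (hs : 2 ≤ s)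
    (A : Fin n → Fin n → Prop) (σ : Fin n → Fin n → ℤ)
    (hσ : ∀ j i, A j i → σ j i = -1 ∨ σ j i = 0 ∨ σ j i = 1)
    (hcyc : ¬ hasNonnegCycle n A σ) :
    ∀ x y : Fin n → Fin s, x ≠ y →
      ¬ ∃ f : (Fin n → Fin s) → Fin n → Fin s,
          memFA A σ f ∧ f x = x ∧ f y = y := by
  classical
  rintro x y hxy ⟨f, hf, hfx, hfy⟩
  set ε : Fin n → ℤ := fun i => if x i ≤ y i then 1 else -1 with hεdef
  have hε1 : ∀ i, x i ≤ y i → ε i = 1 := by intro i h; simp [hεdef, h]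
  have hε2 : ∀ i, ¬ x i ≤ y i → ε i = -1 := by intro i h; simp [hεdef, h]
  have hεsq : ∀ i, ε i * ε i = 1 := by
    intro i; simp only [hεdef]; split <;> norm_num
  have hεne : ∀ i, ε i ≠ 0 := by
    intro i; simp only [hεdef]; split <;> norm_num
  -- main claim
  have claim : ∀ i : Fin n, x i ≠ y i → ∃ j, A j i ∧ x j ≠ y j ∧
      (σ j i = 0 ∨ σ j i * ε j = ε i) := by
    intro i hi
    rcases lt_or_gt_of_ne hi with hlt | hlt
    · have hns : ¬ sleA A σ i y x := by
        intro h
        have h2 := hf i y x h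
        rw [hfx, hfy] at h2
        exact absurd h2 (not_le.mpr hlt)
      simp only [sleA] at hns
      push_neg at hns
      obtain ⟨j, hji, hcond⟩ := hns
      rcases hσ j i hji with h0 | h0 | h0
      · have e1 : σ j i = 0 → y j = x j := fun h => absurd h (by rw [h0]; norm_num)
        have e2 : σ j i = 1 → y j ≤ x j := fun h => absurd h (by rw [h0]; norm_num)
        obtain ⟨-, hyx⟩ := hcond e1 e2
        refine ⟨j, hji, hyx.ne', Or.inr ?_⟩
        rw [h0, hε2 j (not_le.mpr hyx), hε1 i hlt.le]; norm_num
      · by_cases hxy' : x j = y j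
        · exfalso
          have e1 : σ j i = 0 → y j = x j := fun _ => hxy'.symm
          have e2 : σ j i = 1 → y j ≤ x j := fun h => absurd h (by rw [h0]; norm_num)
          obtain ⟨hm, -⟩ := hcond e1 e2
          rw [h0] at hm; norm_num at hm
        · exact ⟨j, hji, hxy', Or.inl h0⟩
      · by_cases hle : y j ≤ x j
        · exfalso
          have e1 : σ j i = 0 → y j = x j := fun h => absurd h (by rw [h0]; norm_num)
          obtain ⟨hm, -⟩ := hcond e1 (fun _ => hle)
          rw [h0] at hm; norm_num at hm
        · have hxj : x j < y j := not_le.mp hle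
          refine ⟨j, hji, hxj.ne, Or.inr ?_⟩
          rw [h0, hε1 j hxj.le, hε1 i hlt.le]; norm_num
    · have hns : ¬ sleA A σ i x y := by
        intro h
        have h2 := hf i x y h
        rw [hfx, hfy] at h2
        exact absurd h2 (not_le.mpr hlt)
      simp only [sleA] at hns
      push_neg at hns
      obtain ⟨j, hji, hcond⟩ := hns
      rcases hσ j i hji with h0 | h0 | h0
      · have e1 : σ j i = 0 → x j = y j := fun h => absurd h (by rw [h0]; norm_num)
        have e2 : σ j i = 1 → x j ≤ y j := fun h => absurd h (by rw [h0]; norm_num)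
        obtain ⟨-, hxylt⟩ := hcond e1 e2
        refine ⟨j, hji, hxylt.ne, Or.inr ?_⟩
        rw [h0, hε1 j hxylt.le, hε2 i (not_le.mpr hlt)]; norm_num
      · by_cases hxy' : x j = y j
        · exfalso
          have e2 : σ j i = 1 → x j ≤ y j := fun h => absurd h (by rw [h0]; norm_num)
          obtain ⟨hm, -⟩ := hcond (fun _ => hxy') e2
          rw [h0] at hm; norm_num at hm
        · exact ⟨j, hji, hxy', Or.inl h0⟩
      · by_cases hle : x j ≤ y j
        · exfalso
          have e1 : σ j i = 0 → x j = y j := fun h => absurd h (by rw [h0]; norm_num)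
          obtain ⟨hm, -⟩ := hcond e1 (fun _ => hle)
          rw [h0] at hm; norm_num at hm
        · have hyj : y j < x j := not_le.mp hle
          refine ⟨j, hji, hyj.ne', Or.inr ?_⟩
          rw [h0, hε2 j hle, hε2 i (not_le.mpr hlt)]; norm_num
  -- build the predecessor chain
  obtain ⟨i0, hi0⟩ : ∃ i, x i ≠ y i := Function.ne_iff.mp hxy
  have step : ∀ i : {i : Fin n // x i ≠ y i}, ∃ j : {i : Fin n // x i ≠ y i},
      A j.1 i.1 ∧ (σ j.1 i.1 = 0 ∨ σ j.1 i.1 * ε j.1 = ε i.1) := by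
    rintro ⟨i, hi⟩
    obtain ⟨j, h1, h2, h3⟩ := claim i hi
    exact ⟨⟨j, h2⟩, h1, h3⟩
  choose g hgA hgσ using step
  set u : ℕ → {i : Fin n // x i ≠ y i} := fun t => g^[t] ⟨i0, hi0⟩ with hudef
  have hu : ∀ t, u (t + 1) = g (u t) := fun t => Function.iterate_succ_apply' g t _
  -- pigeonhole: a repeat exists
  have hP : ∃ t2 : ℕ, ∃ t1, t1 < t2 ∧ u t1 = u t2 := by
    obtain ⟨a, b, hab, he⟩ := Finite.exists_ne_map_eq_of_infinite u
    rcases hab.lt_or_gt with h | h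
    · exact ⟨b, a, h, he⟩
    · exact ⟨a, b, h, he.symm⟩
  set t2 := Nat.find hP with ht2def
  obtain ⟨t1, ht12, hueq⟩ := Nat.find_spec hP
  have hinj : ∀ a b, a < t2 → b < t2 → u a = u b → a = b := by
    intro a b ha hb hab
    by_contra hne
    rcases (Ne.lt_or_gt hne) with h | h
    · exact absurd hb (not_lt.mpr (Nat.find_le ⟨a, h, hab⟩))
    · exact absurd ha (not_lt.mpr (Nat.find_le ⟨b, h, hab.symm⟩))
  set k := t2 - t1 with hkdef
  have hk : 0 < k := by omega
  have hkle : k ≤ t2 := by omega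
  set v : ℕ → Fin n := fun t => (u (t2 - t % k)).1 with hvdef
  -- index step lemma
  have hstep : ∀ t, u (t2 - (t + 1) % k) = u (t2 - t % k - 1) := by
    intro t
    have hmod : t % k < k := Nat.mod_lt t hk
    have h1 : (t % k + 1) % k = (t + 1) % k := Nat.mod_add_mod t k 1
    rcases Nat.lt_or_ge (t % k + 1) k with h | h
    · rw [← h1, Nat.mod_eq_of_lt h]
      have e : t2 - (t % k + 1) = t2 - t % k - 1 := by omega
      rw [e]
    · have he : (t + 1) % k = 0 := by
        rw [← h1]
        have : t % k + 1 = k := by omega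
        rw [this, Nat.mod_self]
      rw [he]
      have h3 : t2 - t % k - 1 = t1 := by omega
      rw [h3, Nat.sub_zero]
      exact hueq.symm
  have harith : ∀ t, t2 - t % k = (t2 - t % k - 1) + 1 := by
    intro t
    have hmod : t % k < k := Nat.mod_lt t hk
    omega
  have harcs : ∀ t, A (v t) (v (t + 1)) := by
    intro t
    show A (u (t2 - t % k)).1 (u (t2 - (t + 1) % k)).1
    rw [hstep t]
    have := hgA (u (t2 - t % k - 1))
    rw [← hu] at this
    rw [harith t]
    exact this
  have hper : ∀ t, v (t + k) = v t := by
    intro t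
    show (u (t2 - (t + k) % k)).1 = (u (t2 - t % k)).1
    rw [Nat.add_mod_right]
  have hinjv : ∀ a b, a < k → b < k → v a = v b → a = b := by
    intro a b ha hb hab
    have ha' : a % k = a := Nat.mod_eq_of_lt ha
    have hb' : b % k = b := Nat.mod_eq_of_lt hb
    have hab' : u (t2 - a) = u (t2 - b) := by
      apply Subtype.ext
      simpa [hvdef, ha', hb'] using hab
    rcases Nat.eq_zero_or_pos a with rfl | hap <;> rcases Nat.eq_zero_or_pos b with rfl | hbp
    · rfl
    · exfalso
      rw [Nat.sub_zero, ← hueq] at hab'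
      have := hinj t1 (t2 - b) ht12 (by omega) hab'
      omega
    · exfalso
      rw [Nat.sub_zero, ← hueq] at hab'
      have := hinj (t2 - a) t1 (by omega) ht12 hab'
      omega
    · have := hinj (t2 - a) (t2 - b) (by omega) (by omega) hab'
      omega
  -- sign product telescoping
  have prodlem : ∀ m,
      (∏ t ∈ Finset.range m, σ (u (t1 + t + 1)).1 (u (t1 + t)).1) * ε (u (t1 + m)).1
        = ε (u t1).1 ∨
      (∏ t ∈ Finset.range m, σ (u (t1 + t + 1)).1 (u (t1 + t)).1) = 0 := by
    intro m
    induction m with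
    | zero => left; simp
    | succ m ih =>
      rw [Finset.prod_range_succ]
      rcases ih with ih | ih
      · have hg := hgσ (u (t1 + m))
        rw [← hu (t1 + m)] at hg
        rcases hg with h0 | h0
        · right; rw [h0, mul_zero]
        · left
          have : t1 + (m + 1) = t1 + m + 1 := by omega
          rw [this, mul_assoc, h0, ih]
      · right; rw [ih, zero_mul]
  have hPk : 0 ≤ ∏ t ∈ Finset.range k, σ (u (t1 + t + 1)).1 (u (t1 + t)).1 := by
    rcases prodlem k with h | h
    · have ht1k : t1 + k = t2 := by omega
      rw [ht1k, ← hueq] at h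
      have hP1 : (∏ t ∈ Finset.range k, σ (u (t1 + t + 1)).1 (u (t1 + t)).1) = 1 := by
        have := mul_right_cancel₀ (hεne (u t1).1) (h.trans (one_mul (ε (u t1).1)).symm)
        exact this
      rw [hP1]; norm_num
    · rw [h]
  have hprodeq : (∏ t ∈ Finset.range k, σ (v t) (v (t + 1)))
      = ∏ t ∈ Finset.range k, σ (u (t1 + t + 1)).1 (u (t1 + t)).1 := by
    rw [← Finset.prod_range_reflect (fun t => σ (u (t1 + t + 1)).1 (u (t1 + t)).1) k]
    apply Finset.prod_congr rfl
    intro t ht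
    rw [Finset.mem_range] at ht
    have ht' : t % k = t := Nat.mod_eq_of_lt ht
    show σ (u (t2 - t % k)).1 (u (t2 - (t + 1) % k)).1 = _
    rw [hstep t, ht']
    have e1 : t2 - t = t1 + (k - 1 - t) + 1 := by omega
    have e2 : t2 - t - 1 = t1 + (k - 1 - t) := by omega
    rw [e2, e1]
  exact hcyc ⟨k, v, hk, hper, harcs, hinjv, by rw [hprodeq]; exact hPk⟩
end

section
/- For every non-empty independent set Z of the guessing graph G(D,s) there exists f ∈ F(D,s) such that Z ⊆ Fix(f). Consequently the maximum number of fixed points over all f ∈ F(D,s) equals the independence number α(G(D,s)). -/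
/-- `x` and `y` are adjacent in the guessing graph `G(D,s)`. -/
def gEdge {n s : ℕ} (N0 Np Nm : Fin n → Finset (Fin n)) (x y : Fin n → Fin s) : Prop :=
  ∃ i : Fin n, (sle N0 Np Nm i x y ∧ y i < x i) ∨ (sle N0 Np Nm i y x ∧ x i < y i)

lemma part1 {n s : ℕ} (hs : 2 ≤ s) (N0 Np Nm : Fin n → Finset (Fin n))
    (Z : Set (Fin n → Fin s))
    (hind : ∀ x ∈ Z, ∀ y ∈ Z, ¬ gEdge N0 Np Nm x y) :
    ∃ f : (Fin n → Fin s) → Fin n → Fin s,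
      memF N0 Np Nm f ∧ ∀ x ∈ Z, f x = x := by
  classical
  have hz : (0:ℕ) < s := by omega
  set T : (Fin n → Fin s) → Fin n → Finset (Fin s) :=
    fun x i => (Finset.univ.filter
      (fun z : Fin n → Fin s => z ∈ Z ∧ sle N0 Np Nm i z x)).image (fun z => z i)
    with hT
  refine ⟨fun x i => if h : (T x i).Nonempty then (T x i).max' h else ⟨0, hz⟩, ?_, ?_⟩
  · intro i x y hxy
    have hsub : T x i ⊆ T y i := by
      intro v hv
      simp only [hT, Finset.mem_image, Finset.mem_filter, Finset.mem_univ, true_and] at hv ⊢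
      obtain ⟨z, ⟨hzZ, hzx⟩, rfl⟩ := hv
      exact ⟨z, ⟨hzZ, sle_trans hzx hxy⟩, rfl⟩
    by_cases h : (T x i).Nonempty
    · have h' : (T y i).Nonempty := h.mono hsub
      simp only [dif_pos h, dif_pos h']
      exact Finset.max'_subset h hsub
    · simp only [dif_neg h]
      split
      · exact Fin.mk_le_of_le_val (Nat.zero_le _)
      · exact le_rfl
  · intro x hx
    funext i
    have hmem : x i ∈ T x i := by
      simp only [hT, Finset.mem_image, Finset.mem_filter, Finset.mem_univ, true_and]
      exact ⟨x, ⟨hx, sle_refl N0 Np Nm i x⟩, rfl⟩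
    have hne : (T x i).Nonempty := ⟨_, hmem⟩
    simp only [dif_pos hne]
    refine le_antisymm (Finset.max'_le _ _ _ ?_) (Finset.le_max' _ _ hmem)
    intro v hv
    simp only [hT, Finset.mem_image, Finset.mem_filter, Finset.mem_univ, true_and] at hv
    obtain ⟨z, ⟨hzZ, hzx⟩, rfl⟩ := hv
    by_contra hlt
    push_neg at hlt
    exact hind x hx z hzZ ⟨i, Or.inr ⟨hzx, hlt⟩⟩

lemma fix_indep {n s : ℕ} {N0 Np Nm : Fin n → Finset (Fin n)}
    {f : (Fin n → Fin s) → Fin n → Fin s} (hf : memF N0 Np Nm f) :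
    ∀ x ∈ {x | f x = x}, ∀ y ∈ {x | f x = x}, ¬ gEdge N0 Np Nm x y := by
  rintro x hx y hy ⟨i, h | h⟩
  · have := hf i x y h.1
    rw [hx, hy] at this
    exact absurd this (not_le_of_gt h.2)
  · have := hf i y x h.1
    rw [hx, hy] at this
    exact absurd this (not_le_of_gt h.2)

/-- every non-empty independent set `Z` of the guessing graph
`G(D,s)` is contained in `Fix(f)` for some `f ∈ F(D,s)`; consequently the
maximum number of fixed points over `F(D,s)` equals the independence number
of `G(D,s)`. -/
theorem stmt3 (n s : ℕ) (hn : 1 ≤ n) (hs : 2 ≤ s)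
    (N0 Np Nm : Fin n → Finset (Fin n))
    (h0p : ∀ i, Disjoint (N0 i) (Np i))
    (h0m : ∀ i, Disjoint (N0 i) (Nm i))
    (hpm : ∀ i, Disjoint (Np i) (Nm i)) :
    (∀ Z : Set (Fin n → Fin s), Z.Nonempty →
      (∀ x ∈ Z, ∀ y ∈ Z, ¬ gEdge N0 Np Nm x y) →
      ∃ f : (Fin n → Fin s) → Fin n → Fin s,
        memF N0 Np Nm f ∧ ∀ x ∈ Z, f x = x) ∧
    sSup {m : ℕ | ∃ f : (Fin n → Fin s) → Fin n → Fin s,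
        memF N0 Np Nm f ∧ m = Set.ncard {x | f x = x}} =
      sSup {m : ℕ | ∃ Z : Set (Fin n → Fin s),
        (∀ x ∈ Z, ∀ y ∈ Z, ¬ gEdge N0 Np Nm x y) ∧ m = Z.ncard} := by
  constructor
  · intro Z _ hind
    exact part1 hs N0 Np Nm Z hind
  · set A : Set ℕ := {m : ℕ | ∃ f : (Fin n → Fin s) → Fin n → Fin s,
        memF N0 Np Nm f ∧ m = Set.ncard {x | f x = x}} with hA
    set B : Set ℕ := {m : ℕ | ∃ Z : Set (Fin n → Fin s),
        (∀ x ∈ Z, ∀ y ∈ Z, ¬ gEdge N0 Np Nm x y) ∧ m = Z.ncard} with hB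
    have hbound : ∀ (S : Set (Fin n → Fin s)), S.ncard ≤ Nat.card (Fin n → Fin s) := by
      intro S
      rw [← Set.ncard_univ]
      exact Set.ncard_le_ncard (Set.subset_univ _) Set.finite_univ
    have hAbdd : BddAbove A := by
      refine ⟨Nat.card (Fin n → Fin s), ?_⟩
      rintro m ⟨f, _, rfl⟩
      exact hbound _
    have hBbdd : BddAbove B := by
      refine ⟨Nat.card (Fin n → Fin s), ?_⟩
      rintro m ⟨Z, _, rfl⟩
      exact hbound _
    have hz : (0:ℕ) < s := by omega
    have hAne : A.Nonempty := by
      refine ⟨_, fun _ _ => ⟨0, hz⟩, fun _ _ _ _ => le_rfl, rfl⟩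
    have hBne : B.Nonempty := by
      refine ⟨0, ∅, ?_, by simp⟩
      intro x hx
      simp at hx
    apply le_antisymm
    · apply csSup_le hAne
      rintro m ⟨f, hf, rfl⟩
      exact le_csSup hBbdd ⟨{x | f x = x}, fix_indep hf, rfl⟩
    · apply csSup_le hBne
      rintro m ⟨Z, hind, rfl⟩
      obtain ⟨f, hf, hfix⟩ := part1 hs N0 Np Nm Z hind
      have hsub : Z ⊆ {x | f x = x} := fun x hx => hfix x hx
      calc Z.ncard ≤ Set.ncard {x | f x = x} :=
            Set.ncard_le_ncard hsub (Set.toFinite _)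
        _ ≤ sSup A := le_csSup hAbdd ⟨f, hf, rfl⟩
end

section
/- For the negative clique K_n^- (complete digraph without loops, all arcs signed −1), two states x,y ∈ [s]^n are adjacent in the guessing graph G(K_n^-, s) if and only if x ≤ y or y ≤ x componentwise (and x ≠ y). Hence the sets of fixed points of networks on K_n^- are exactly the antichains of the componentwise order on [s]^n. -/
/-- `f ∈ F(K_n^-, s)`: each `f_i` is monotone w.r.t. `≤ᵢ`, where `x ≤ᵢ y` iff
`x_j ≥ y_j` for all `j ≠ i` (all arcs `(j,i)`, `j ≠ i`, signed `−1`). -/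
def memFnegClique {n s : ℕ} (f : (Fin n → Fin s) → Fin n → Fin s) : Prop :=
  ∀ (i : Fin n) (x y : Fin n → Fin s), (∀ j, j ≠ i → y j ≤ x j) → f x i ≤ f y i

open Classical in
/-- candidate values at coordinate `i` for state `x`. -/
noncomputable def ncSet {n s : ℕ} [NeZero s] (S : Set (Fin n → Fin s))
    (x : Fin n → Fin s) (i : Fin n) : Finset (Fin s) :=
  insert (0 : Fin s) (Finset.univ.filter
    (fun v : Fin s => ∃ z ∈ S, z i = v ∧ ∀ j, j ≠ i → x j ≤ z j))

noncomputable def ncFun {n s : ℕ} [NeZero s] (S : Set (Fin n → Fin s))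
    (x : Fin n → Fin s) (i : Fin n) : Fin s :=
  (ncSet S x i).max' (Finset.insert_nonempty _ _)

lemma le_ncFun {n s : ℕ} [NeZero s] {S : Set (Fin n → Fin s)}
    {x z : Fin n → Fin s} {i : Fin n} (hz : z ∈ S) (h : ∀ j, j ≠ i → x j ≤ z j) :
    z i ≤ ncFun S x i := by
  classical
  apply Finset.le_max'
  exact Finset.mem_insert_of_mem
    (Finset.mem_filter.2 ⟨Finset.mem_univ _, z, hz, rfl, h⟩)

lemma ncFun_cases {n s : ℕ} [NeZero s] (S : Set (Fin n → Fin s))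
    (x : Fin n → Fin s) (i : Fin n) :
    ncFun S x i = 0 ∨ ∃ z ∈ S, z i = ncFun S x i ∧ ∀ j, j ≠ i → x j ≤ z j := by
  classical
  have h : ncFun S x i ∈ ncSet S x i := Finset.max'_mem _ _
  rcases Finset.mem_insert.1 h with h0 | hmem
  · exact Or.inl h0
  · right
    have := Finset.mem_filter.1 hmem
    exact this.2

lemma ncFun_mem {n s : ℕ} [NeZero s] (S : Set (Fin n → Fin s)) :
    memFnegClique (ncFun S) := by
  classical
  intro i x y h
  apply Finset.max'_subset
  apply Finset.insert_subset_insert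
  intro v hv
  simp only [Finset.mem_filter, Finset.mem_univ, true_and] at hv ⊢
  obtain ⟨z, hz, hzi, hle⟩ := hv
  exact ⟨z, hz, hzi, fun j hj => le_trans (h j hj) (hle j hj)⟩

lemma ncFun_fixed_of_mem {n s : ℕ} [NeZero s] {S : Set (Fin n → Fin s)}
    (hA : IsAntichain (· ≤ ·) S) {x : Fin n → Fin s} (hx : x ∈ S) :
    ncFun S x = x := by
  funext i
  have hge : x i ≤ ncFun S x i := le_ncFun hx (fun j _ => le_refl _)
  refine le_antisymm ?_ hge
  rcases ncFun_cases S x i with h0 | ⟨z, hz, hzi, hle⟩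
  · rw [h0]; exact Fin.zero_le _
  · by_cases hzx : z = x
    · rw [← hzi, hzx]
    · exfalso
      have hxz : x ≤ z := by
        intro j
        by_cases hj : j = i
        · subst hj; rw [hzi]; exact hge
        · exact hle j hj
      exact hA hx hz (fun h => hzx h.symm) hxz

lemma mem_of_ncFun_fixed {n s : ℕ} [NeZero s] {S : Set (Fin n → Fin s)}
    (hS : S.Nonempty) {x : Fin n → Fin s} (hx : ncFun S x = x) :
    x ∈ S := by
  classical
  by_contra hxS
  obtain ⟨w, hw⟩ := hS
  -- Claim: there is z ∈ S dominating x componentwise.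
  have C : ∃ z ∈ S, ∀ j, x j ≤ z j := by
    by_cases hne : ∃ i, ∃ z ∈ S, z i = ncFun S x i ∧ ∀ j, j ≠ i → x j ≤ z j
    · obtain ⟨i, z, hz, hzi, hle⟩ := hne
      refine ⟨z, hz, fun j => ?_⟩
      by_cases hj : j = i
      · subst hj; rw [hzi, hx]
      · exact hle j hj
    · -- all coordinates of x are zero
      have hx0 : ∀ i, x i = 0 := by
        intro i
        rcases ncFun_cases S x i with h0 | ⟨z, hz, hzi, hle⟩
        · rw [← hx]; exact h0
        · exact absurd ⟨i, z, hz, hzi, hle⟩ hne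
      exact ⟨w, hw, fun j => by rw [hx0 j]; exact Fin.zero_le _⟩
  obtain ⟨z, hz, hzle⟩ := C
  have hzx : z ≠ x := fun h => hxS (h ▸ hz)
  have : ∃ k, x k < z k := by
    by_contra hall
    push_neg at hall
    exact hzx (funext fun k => le_antisymm (hall k) (hzle k))
  obtain ⟨k, hk⟩ := this
  have : z k ≤ ncFun S x k := le_ncFun hz (fun j _ => hzle j)
  rw [hx] at this
  exact absurd (lt_of_lt_of_le hk this) (lt_irrefl _)

lemma exists_ncFun {n s : ℕ} [NeZero s] {S : Set (Fin n → Fin s)}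
    (hS : S.Nonempty) (hA : IsAntichain (· ≤ ·) S) :
    ∃ f : (Fin n → Fin s) → Fin n → Fin s,
      memFnegClique f ∧ {x | f x = x} = S := by
  refine ⟨ncFun S, ncFun_mem S, Set.ext fun x => ⟨?_, ?_⟩⟩
  · exact fun hx => mem_of_ncFun_fixed hS hx
  · exact fun hx => ncFun_fixed_of_mem hA hx

lemma fix_antichain {n s : ℕ} (f : (Fin n → Fin s) → Fin n → Fin s)
    (hf : memFnegClique f) : IsAntichain (· ≤ ·) {x | f x = x} := by
  intro a ha b hb hab hle
  apply hab
  funext i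
  have h1 : f b i ≤ f a i := hf i b a (fun j _ => hle j)
  rw [ha, hb] at h1
  exact le_antisymm (hle i) h1

/-- in the guessing graph `G(K_n^-, s)`, `x` and `y` are adjacent
iff they are distinct and componentwise comparable; hence the fixed point sets
of networks on `K_n^-` are exactly the antichains of the componentwise order. -/
theorem stmt7 (n s : ℕ) (hs : 2 ≤ s) :
    (∀ x y : Fin n → Fin s,
      (¬ ∃ f : (Fin n → Fin s) → Fin n → Fin s,
          memFnegClique f ∧ f x = x ∧ f y = y)
      ↔ (x ≠ y ∧ ((∀ i, x i ≤ y i) ∨ (∀ i, y i ≤ x i)))) ∧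
    (∀ f : (Fin n → Fin s) → Fin n → Fin s, memFnegClique f →
      IsAntichain (· ≤ ·) {x | f x = x}) ∧
    (∀ S : Set (Fin n → Fin s), S.Nonempty → IsAntichain (· ≤ ·) S →
      ∃ f : (Fin n → Fin s) → Fin n → Fin s,
        memFnegClique f ∧ {x | f x = x} = S) := by
  haveI : NeZero s := ⟨by omega⟩
  refine ⟨?_, fix_antichain, fun S hS hA => exists_ncFun hS hA⟩
  intro x y
  constructor
  · intro hno
    by_contra hc
    push_neg at hc
    by_cases hxy : x = y
    · exact hno ⟨fun _ => y, fun i a b _ => le_refl _, by rw [hxy], rfl⟩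
    · obtain ⟨h1, h2⟩ := hc hxy
      obtain ⟨i1, hi1⟩ := h1
      obtain ⟨i2, hi2⟩ := h2
      have hA : IsAntichain (· ≤ ·) ({x, y} : Set (Fin n → Fin s)) := by
        intro a ha b hb hab hle
        rcases ha with rfl | ha <;> rcases hb with rfl | hb
        · exact hab rfl
        · rw [Set.mem_singleton_iff] at hb; subst hb
          exact absurd (hle i1) (not_le.2 hi1)
        · rw [Set.mem_singleton_iff] at ha; subst ha
          exact absurd (hle i2) (not_le.2 hi2)
        · rw [Set.mem_singleton_iff] at ha hb; subst ha; subst hb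
          exact hab rfl
      obtain ⟨f, hf, hfix⟩ := exists_ncFun ⟨x, Set.mem_insert _ _⟩ hA
      have hfx : f x = x := by
        have : x ∈ {z | f z = z} := hfix ▸ Set.mem_insert _ _
        exact this
      have hfy : f y = y := by
        have : y ∈ {z | f z = z} := hfix ▸ Set.mem_insert_of_mem _ rfl
        exact this
      exact hno ⟨f, hf, hfx, hfy⟩
  · rintro ⟨hxy, hcomp⟩ ⟨f, hf, hfx, hfy⟩
    have hA := fix_antichain f hf
    rcases hcomp with h | h
    · exact hA hfx hfy hxy (fun i => h i)
    · exact hA hfy hfx (fun he => hxy he.symm) (fun i => h i)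
end

section
/- The guessing number of the negative clique satisfies g(K_n^-, s) = log_s |B(n, ⌊n(s−1)/2⌋, s)|, where B(n,w,s) = {x ∈ [s]^n : Σ x_i = w}. In particular for s = 2, g(K_n^-, 2) = log_2 C(n, ⌊n/2⌋). -/
open Finset

/-- A symmetric chain partition of a poset graded by `r` with top rank `N`. The chains are the
fibres of `chainOf`; the chain with label `c` has exactly one element of each rank in
`[base c, N - base c]`, and its elements are ordered by rank. -/
structure SymmetricChainPartition (α : Type*) [LE α] (r : α → ℕ) (N : ℕ) (ι : Type*) where
  chainOf : α → ι
  base : ι → ℕ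
  le_of_rank_le : ∀ x y, chainOf x = chainOf y → r x ≤ r y → x ≤ y
  base_le_rank : ∀ x, base (chainOf x) ≤ r x
  rank_add_base_le : ∀ x, r x + base (chainOf x) ≤ N
  exists_rank_eq : ∀ x t, base (chainOf x) ≤ t → t + base (chainOf x) ≤ N →
    ∃ y, chainOf y = chainOf x ∧ r y = t

namespace SymmetricChainPartition

variable {α β ι κ : Type*} {r : α → ℕ} {r' : β → ℕ} {N M : ℕ}

def ofSubsingleton [Preorder α] [Subsingleton α] (r : α → ℕ) (hr : ∀ x, r x = 0) :
    SymmetricChainPartition α r 0 Unit where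
  chainOf _ := ()
  base _ := 0
  le_of_rank_le x y _ _ := (Subsingleton.elim x y).le
  base_le_rank _ := Nat.zero_le _
  rank_add_base_le x := (hr x).le
  exists_rank_eq x _ _ ht :=
    ⟨x, rfl, (hr x).trans (Nat.le_zero.mp (Nat.le_of_add_right_le ht)).symm⟩

def ofFin (s : ℕ) : SymmetricChainPartition (Fin s) Fin.val (s - 1) Unit where
  chainOf _ := ()
  base _ := 0
  le_of_rank_le _ _ _ h := h
  base_le_rank _ := Nat.zero_le _
  rank_add_base_le x := by omega
  exists_rank_eq x t _ ht :=
    have : t ≤ s - 1 := Nat.le_of_add_right_le ht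
    ⟨⟨t, by have := x.isLt; omega⟩, rfl, rfl⟩

def comap [LE α] [LE β] (P : SymmetricChainPartition β r' N κ) (e : α ≃o β)
    (hr : ∀ x, r' (e x) = r x) : SymmetricChainPartition α r N κ where
  chainOf x := P.chainOf (e x)
  base := P.base
  le_of_rank_le x y h hxy := e.le_iff_le.mp (P.le_of_rank_le _ _ h (by rwa [hr, hr]))
  base_le_rank x := hr x ▸ P.base_le_rank (e x)
  rank_add_base_le x := hr x ▸ P.rank_add_base_le (e x)
  exists_rank_eq x t h1 h2 := by
    obtain ⟨y, hy, hyt⟩ := P.exists_rank_eq (e x) t h1 h2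
    exact ⟨e.symm y, by simpa using hy, by rw [← hr, e.apply_symm_apply, hyt]⟩

/-- The product of a chain `p₀ < ⋯ < pₘ` and a chain `q₀ < ⋯ < qₖ` splits into the hooks
`(pⱼ, q₀), …, (pⱼ, qₖ₋ⱼ), (pⱼ₊₁, qₖ₋ⱼ), …, (pₘ, qₖ₋ⱼ)`, which are again symmetric;
`(pᵢ, qₗ)` lies on the hook `j = min i (k - l)`. -/
def prod [LE α] [LE β] (P : SymmetricChainPartition α r N ι)
    (Q : SymmetricChainPartition β r' M κ) :
    SymmetricChainPartition (α × β) (fun x => r x.1 + r' x.2) (N + M) (ι × κ × ℕ) where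
  chainOf x := (P.chainOf x.1, Q.chainOf x.2,
    min (r x.1 - P.base (P.chainOf x.1)) (M - Q.base (Q.chainOf x.2) - r' x.2))
  base c := P.base c.1 + Q.base c.2.1 + c.2.2
  le_of_rank_le := by
    rintro ⟨a, b⟩ ⟨a', b'⟩ h hr
    simp only [Prod.mk.injEq] at h hr
    obtain ⟨hc, hd, hj⟩ := h
    have ha := P.base_le_rank a
    have ha' := P.base_le_rank a'
    have hb := Q.rank_add_base_le b
    have hb' := Q.rank_add_base_le b'
    rw [hc] at ha hj
    rw [hd] at hb hj
    exact Prod.mk_le_mk.2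
      ⟨P.le_of_rank_le a a' hc (by omega), Q.le_of_rank_le b b' hd (by omega)⟩
  base_le_rank := by
    rintro ⟨a, b⟩
    have := P.base_le_rank a
    have := Q.base_le_rank b
    dsimp only
    omega
  rank_add_base_le := by
    rintro ⟨a, b⟩
    have := P.rank_add_base_le a
    have := Q.rank_add_base_le b
    dsimp only
    omega
  exists_rank_eq := by
    rintro ⟨a, b⟩ t h1 h2
    dsimp only at h1 h2 ⊢
    have := P.base_le_rank a
    have := P.rank_add_base_le a
    have := Q.base_le_rank b
    have := Q.rank_add_base_le b
    set j := min (r a - P.base (P.chainOf a)) (M - Q.base (Q.chainOf b) - r' b)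
    by_cases ht : t ≤ P.base (P.chainOf a) + M - Q.base (Q.chainOf b)
    · obtain ⟨a', ha', ha'r⟩ := P.exists_rank_eq a (P.base (P.chainOf a) + j)
        (by omega) (by omega)
      obtain ⟨b', hb', hb'r⟩ := Q.exists_rank_eq b (t - P.base (P.chainOf a) - j)
        (by omega) (by omega)
      refine ⟨(a', b'), ?_, by dsimp only; omega⟩
      simp only [Prod.mk.injEq, ha', hb', true_and]
      omega
    · obtain ⟨a', ha', ha'r⟩ := P.exists_rank_eq a (t - (M - Q.base (Q.chainOf b) - j))
        (by omega) (by omega)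
      obtain ⟨b', hb', hb'r⟩ := Q.exists_rank_eq b (M - Q.base (Q.chainOf b) - j)
        (by omega) (by omega)
      refine ⟨(a', b'), ?_, by dsimp only; omega⟩
      simp only [Prod.mk.injEq, ha', hb', true_and]
      omega

theorem card_le_card_rank_eq_half [LE α] [Fintype α] (P : SymmetricChainPartition α r N ι)
    {A : Finset α} (hA : IsAntichain (· ≤ ·) (A : Set α)) :
    #A ≤ #{x | r x = N / 2} := by
  have hmid : ∀ x, ∃ y, P.chainOf y = P.chainOf x ∧ r y = N / 2 := fun x =>
    have := P.base_le_rank x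
    have := P.rank_add_base_le x
    P.exists_rank_eq x (N / 2) (by omega) (by omega)
  choose μ hμ hμr using hmid
  refine card_le_card_of_injOn μ (fun x _ => by simp [hμr]) fun x hx y hy hxy => ?_
  have hc : P.chainOf x = P.chainOf y := by rw [← hμ x, ← hμ y, hxy]
  rcases le_total (r x) (r y) with h | h
  · exact hA.eq hx hy (P.le_of_rank_le x y hc h)
  · exact (hA.eq hy hx (P.le_of_rank_le y x hc.symm h)).symm

end SymmetricChainPartition

def weight {n s : ℕ} (x : Fin n → Fin s) : ℕ := ∑ i, (x i : ℕ)

theorem exists_symmetricChainPartition_weight (s n : ℕ) :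
    ∃ ι : Type, Nonempty (SymmetricChainPartition (Fin n → Fin s) weight (n * (s - 1)) ι) := by
  induction n with
  | zero =>
    rw [zero_mul]
    exact ⟨Unit, ⟨.ofSubsingleton weight fun _ => by simp [weight]⟩⟩
  | succ n ih =>
    obtain ⟨ι, ⟨P⟩⟩ := ih
    rw [Nat.succ_mul, Nat.add_comm (n * (s - 1))]
    exact ⟨_, ⟨((SymmetricChainPartition.ofFin s).prod P).comap (Fin.consOrderIso _).symm
      fun x => (Fin.sum_univ_succ fun i => (x i : ℕ)).symm⟩⟩

theorem isAntichain_setOf_apply_eq_self {n s : ℕ} {f : (Fin n → Fin s) → Fin n → Fin s}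
    (hf : memFnegClique f) : IsAntichain (· ≤ ·) {x | f x = x} := by
  intro x hx y hy hne hxy
  refine hne (funext fun i => le_antisymm (hxy i) ?_)
  have h := hf i y x fun j _ => hxy j
  rwa [hx, hy] at h

def clampToWeight {n s : ℕ} (hs : 0 < s) (w : ℕ) (x : Fin n → Fin s) (i : Fin n) : Fin s :=
  ⟨min (s - 1) (w - ∑ j ∈ univ.erase i, (x j : ℕ)), by omega⟩

theorem memFnegClique_clampToWeight {n s : ℕ} (hs : 0 < s) (w : ℕ) :
    memFnegClique (clampToWeight (n := n) hs w) := by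
  intro i x y h
  have : ∑ j ∈ univ.erase i, (y j : ℕ) ≤ ∑ j ∈ univ.erase i, (x j : ℕ) :=
    sum_le_sum fun j hj => h j (ne_of_mem_erase hj)
  simp only [clampToWeight, Fin.mk_le_mk]
  omega

theorem clampToWeight_eq_self_iff {n s : ℕ} (hs : 0 < s) {w : ℕ} (hw : w ≤ n * (s - 1))
    (x : Fin n → Fin s) : clampToWeight hs w x = x ↔ weight x = w := by
  have hrest : ∀ i, ∑ j ∈ univ.erase i, (x j : ℕ) = weight x - x i := fun i =>
    Nat.eq_sub_of_add_eq' (add_sum_erase univ (fun j => (x j : ℕ)) (mem_univ i))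
  have hle : ∀ i, (x i : ℕ) ≤ weight x := fun i =>
    single_le_sum (f := fun j => (x j : ℕ)) (fun _ _ => Nat.zero_le _) (mem_univ i)
  have hcoord : ∀ i, (clampToWeight hs w x i : ℕ) = min (s - 1) (w - (weight x - x i)) :=
    fun i => by rw [← hrest]; rfl
  constructor
  · intro hfix
    have hi : ∀ i, min (s - 1) (w - (weight x - x i)) = x i := fun i => by
      rw [← hcoord, hfix]
    by_contra hne
    rcases lt_or_gt_of_ne hne with hlt | hgt
    · have htop : ∀ i, (x i : ℕ) = s - 1 := fun i => by
        have := hi i; have := hle i; omega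
      have : weight x = n * (s - 1) := by simp [weight, htop]
      omega
    · obtain ⟨i, hi0⟩ : ∃ i, 0 < (x i : ℕ) := by
        by_contra! h0
        have : weight x = 0 := sum_eq_zero fun i _ => Nat.le_zero.mp (h0 i)
        omega
      have := hi i; have := hle i; omega
  · intro hx
    funext i
    apply Fin.ext
    rw [hcoord]
    have := hle i; have := (x i).isLt
    omega

theorem card_filter_weight_eq_choose (n k : ℕ) :
    #{x : Fin n → Fin 2 | weight x = k} = n.choose k := by
  have hval : ∀ a : Fin 2, (a : ℕ) = if a = 1 then 1 else 0 := by decide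
  have hind : ∀ a : Fin 2, (if a = 1 then 1 else 0) = a := by decide
  calc #{x : Fin n → Fin 2 | weight x = k} = #(powersetCard k (univ : Finset (Fin n))) := by
        refine card_bij' (fun x _ => ({i | x i = 1} : Finset (Fin n)))
          (fun S _ i => if i ∈ S then (1 : Fin 2) else 0) ?_ ?_ ?_ ?_
        · intro x hx
          rw [mem_powersetCard, card_filter, ← (mem_filter.mp hx).2]
          exact ⟨subset_univ _, sum_congr rfl fun i _ => (hval (x i)).symm⟩
        · intro S hS
          simp only [mem_powersetCard] at hS
          simp [weight, hval, hS.2]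
        · intro x _
          funext i
          simpa only [mem_filter, mem_univ, true_and] using hind (x i)
        · intro S _
          ext i
          simp
    _ = n.choose k := by simp

theorem stmt9_general (n s : ℕ) (hs : 2 ≤ s) :
    IsGreatest {m : ℕ | ∃ f : (Fin n → Fin s) → Fin n → Fin s,
        memFnegClique f ∧ m = Set.ncard {x | f x = x}}
      (Finset.univ.filter
        (fun x : Fin n → Fin s => ∑ i, (x i : ℕ) = n * (s - 1) / 2)).card ∧
    (s = 2 →
      (Finset.univ.filter
        (fun x : Fin n → Fin s => ∑ i, (x i : ℕ) = n * (s - 1) / 2)).card =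
        n.choose (n / 2)) := by
  have hs0 : 0 < s := by omega
  obtain ⟨ι, ⟨P⟩⟩ := exists_symmetricChainPartition_weight s n
  refine ⟨⟨⟨clampToWeight hs0 _, memFnegClique_clampToWeight hs0 (n * (s - 1) / 2), ?_⟩, ?_⟩, ?_⟩
  · rw [← Set.ncard_coe_finset]
    congr
    ext x
    simp only [coe_filter, mem_univ, true_and, Set.mem_ofPred_eq]
    exact (clampToWeight_eq_self_iff hs0 (Nat.div_le_self _ _) x).symm
  · rintro m ⟨f, hf, rfl⟩
    rw [Set.ncard_eq_toFinset_card']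
    exact P.card_le_card_rank_eq_half (by simpa using isAntichain_setOf_apply_eq_self hf)
  · rintro rfl
    rw [show 2 - 1 = 1 from rfl, Nat.mul_one]
    exact card_filter_weight_eq_choose n (n / 2)

/-- the maximum number of fixed points of a network on the negative
clique `K_n^-` equals `|B(n, ⌊n(s−1)/2⌋, s)|`, the size of the middle layer of
`[s]^n`; in particular for `s = 2` it equals `C(n, ⌊n/2⌋)`. -/
theorem stmt9 (n s : ℕ) (hn : 1 ≤ n) (hs : 2 ≤ s) :
    IsGreatest {m : ℕ | ∃ f : (Fin n → Fin s) → Fin n → Fin s,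
        memFnegClique f ∧ m = Set.ncard {x | f x = x}}
      (Finset.univ.filter
        (fun x : Fin n → Fin s => ∑ i, (x i : ℕ) = n * (s - 1) / 2)).card ∧
    (s = 2 →
      (Finset.univ.filter
        (fun x : Fin n → Fin s => ∑ i, (x i : ℕ) = n * (s - 1) / 2)).card =
        n.choose (n / 2)) :=
  stmt9_general n s hs
end

section
/- For any f ∈ F(D,s), the set Fix(f) is a code of minimum Hamming distance at least γ^+, the non-negative girth of D: any two distinct fixed points x, y of f differ in at least γ^+ coordinates. -/
/-- if every non-negative (simple) cycle of `D` has length at least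
`γ⁺`, then for any `f ∈ F(D,s)`, any two distinct fixed points of `f` differ in at
least `γ⁺` coordinates: `Fix(f)` has minimum Hamming distance `≥ γ⁺`. -/
theorem stmt10 (n s γ : ℕ) (hs : 2 ≤ s)
    (A : Fin n → Fin n → Prop) (σ : Fin n → Fin n → ℤ)
    (hσ : ∀ j i, A j i → σ j i = -1 ∨ σ j i = 0 ∨ σ j i = 1)
    (hγ : ∀ (k : ℕ) (v : ℕ → Fin n), 0 < k → (∀ t, v (t + k) = v t) →
      (∀ t, A (v t) (v (t + 1))) →
      (∀ t1 t2, t1 < k → t2 < k → v t1 = v t2 → t1 = t2) →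
      0 ≤ ∏ t ∈ Finset.range k, σ (v t) (v (t + 1)) → γ ≤ k) :
    ∀ f : (Fin n → Fin s) → Fin n → Fin s, memFA A σ f →
      ∀ x y : Fin n → Fin s, f x = x → f y = y → x ≠ y →
        γ ≤ (Finset.univ.filter fun i => x i ≠ y i).card := by
  intro f hf x y hx hy hxy
  classical
  set Δ : Finset (Fin n) := Finset.univ.filter fun i => x i ≠ y i with hΔ
  set e : Fin n → ℤ := fun i => if x i < y i then 1 else -1 with he
  have he2 : ∀ i, e i * e i = 1 := by
    intro i
    simp only [he]
    split <;> norm_num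
  -- Step 1: every disagreement coordinate has an in-neighbour that is also a
  -- disagreement coordinate, with compatible sign.
  have step1 : ∀ i, x i ≠ y i →
      ∃ j, A j i ∧ x j ≠ y j ∧ (σ j i = 0 ∨ σ j i * e j = e i) := by
    intro i hi
    rcases lt_or_gt_of_ne hi with hlt | hlt
    · have hei : e i = 1 := by simp only [he]; exact if_pos hlt
      have hns : ¬ sleA A σ i y x := by
        intro hsle
        have h1 := hf i y x hsle
        rw [hx, hy] at h1
        exact absurd h1 (not_le.mpr hlt)
      have hns2 : ∃ j, A j i ∧ ¬((σ j i = 0 → y j = x j) ∧ (σ j i = 1 → y j ≤ x j) ∧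
          (σ j i = -1 → x j ≤ y j)) := by
        by_contra hc
        push_neg at hc
        exact hns hc
      obtain ⟨j, hA, hnc⟩ := hns2
      rcases hσ j i hA with h0 | h0 | h0
      · have hR : y j < x j := by
          by_contra hle
          rw [not_lt] at hle
          exact hnc ⟨fun h => absurd (h0.symm.trans h) (by norm_num),
            fun h => absurd (h0.symm.trans h) (by norm_num), fun _ => hle⟩
        have hej : e j = -1 := by simp only [he]; exact if_neg (not_lt.mpr hR.le)
        exact ⟨j, hA, (ne_of_lt hR).symm, Or.inr (by rw [h0, hej, hei]; norm_num)⟩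
      · have hP : y j ≠ x j := by
          intro hyx
          exact hnc ⟨fun _ => hyx, fun h => absurd (h0.symm.trans h) (by norm_num),
            fun h => absurd (h0.symm.trans h) (by norm_num)⟩
        exact ⟨j, hA, fun h => hP h.symm, Or.inl h0⟩
      · have hQ : x j < y j := by
          by_contra hle
          rw [not_lt] at hle
          exact hnc ⟨fun h => absurd (h0.symm.trans h) (by norm_num), fun _ => hle,
            fun h => absurd (h0.symm.trans h) (by norm_num)⟩
        have hej : e j = 1 := by simp only [he]; exact if_pos hQ
        exact ⟨j, hA, ne_of_lt hQ, Or.inr (by rw [h0, hej, hei]; norm_num)⟩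
    · have hei : e i = -1 := by simp only [he]; exact if_neg (not_lt.mpr hlt.le)
      have hns : ¬ sleA A σ i x y := by
        intro hsle
        have h1 := hf i x y hsle
        rw [hx, hy] at h1
        exact absurd h1 (not_le.mpr hlt)
      have hns2 : ∃ j, A j i ∧ ¬((σ j i = 0 → x j = y j) ∧ (σ j i = 1 → x j ≤ y j) ∧
          (σ j i = -1 → y j ≤ x j)) := by
        by_contra hc
        push_neg at hc
        exact hns hc
      obtain ⟨j, hA, hnc⟩ := hns2
      rcases hσ j i hA with h0 | h0 | h0
      · have hR : x j < y j := by
          by_contra hle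
          rw [not_lt] at hle
          exact hnc ⟨fun h => absurd (h0.symm.trans h) (by norm_num),
            fun h => absurd (h0.symm.trans h) (by norm_num), fun _ => hle⟩
        have hej : e j = 1 := by simp only [he]; exact if_pos hR
        exact ⟨j, hA, ne_of_lt hR, Or.inr (by rw [h0, hej, hei]; norm_num)⟩
      · have hP : x j ≠ y j := by
          intro hyx
          exact hnc ⟨fun _ => hyx, fun h => absurd (h0.symm.trans h) (by norm_num),
            fun h => absurd (h0.symm.trans h) (by norm_num)⟩
        exact ⟨j, hA, hP, Or.inl h0⟩
      · have hQ : y j < x j := by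
          by_contra hle
          rw [not_lt] at hle
          exact hnc ⟨fun h => absurd (h0.symm.trans h) (by norm_num), fun _ => hle,
            fun h => absurd (h0.symm.trans h) (by norm_num)⟩
        have hej : e j = -1 := by simp only [he]; exact if_neg (not_lt.mpr hQ.le)
        exact ⟨j, hA, (ne_of_lt hQ).symm, Or.inr (by rw [h0, hej, hei]; norm_num)⟩
  -- Step 2: choose a predecessor function g
  have step1' : ∀ i : Fin n, ∃ j, x i ≠ y i →
      A j i ∧ x j ≠ y j ∧ (σ j i = 0 ∨ σ j i * e j = e i) := by
    intro i
    by_cases hi : x i ≠ y i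
    · obtain ⟨j, hj⟩ := step1 i hi
      exact ⟨j, fun _ => hj⟩
    · exact ⟨i, fun h => absurd h hi⟩
  choose g hg using step1'
  obtain ⟨i0, hi0⟩ : ∃ i, x i ≠ y i := Function.ne_iff.mp hxy
  -- Step 3: backward walk
  set u : ℕ → Fin n := fun m => g^[m] i0 with hu
  have husucc : ∀ m, u (m + 1) = g (u m) := by
    intro m
    simp only [hu, Function.iterate_succ_apply']
  have huΔ : ∀ m, x (u m) ≠ y (u m) := by
    intro m
    induction m with
    | zero => rw [hu]; exact hi0
    | succ m ih => rw [husucc]; exact (hg (u m) ih).2.1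
  have harc : ∀ m, A (u (m + 1)) (u m) := by
    intro m; rw [husucc]; exact (hg (u m) (huΔ m)).1
  have hsig : ∀ m, σ (u (m + 1)) (u m) = 0 ∨
      σ (u (m + 1)) (u m) * e (u (m + 1)) = e (u m) := by
    intro m; rw [husucc]; exact (hg (u m) (huΔ m)).2.2
  -- Step 4: pigeonhole, minimal repetition
  have hmaps : ∀ m ∈ Finset.range (Δ.card + 1), u m ∈ Δ := by
    intro m _
    simp only [hΔ, Finset.mem_filter, Finset.mem_univ, true_and]
    exact huΔ m
  have hcardlt : Δ.card < (Finset.range (Δ.card + 1)).card := by simp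
  obtain ⟨a0, _, b0, _, hab, heq⟩ :=
    Finset.exists_ne_map_eq_of_card_lt_of_maps_to hcardlt hmaps
  have hS : ∃ q, ∃ p, p < q ∧ u p = u q := by
    rcases Nat.lt_or_ge a0 b0 with h | h
    · exact ⟨b0, a0, h, heq⟩
    · exact ⟨a0, b0, lt_of_le_of_ne h (Ne.symm hab), heq.symm⟩
  obtain ⟨q, hqspec, hqmin⟩ : ∃ q, (∃ p, p < q ∧ u p = u q) ∧
      ∀ b, b < q → ¬∃ p, p < b ∧ u p = u b :=
    ⟨Nat.find hS, Nat.find_spec hS, fun b hb => Nat.find_min hS hb⟩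
  obtain ⟨p, hpq, hupq⟩ := hqspec
  have huinj : ∀ a b, a < q → b < q → u a = u b → a = b := by
    intro a b ha' hb' hab2
    by_contra hne
    rcases Nat.lt_or_ge a b with h | h
    · exact hqmin b hb' ⟨a, h, hab2⟩
    · exact hqmin a ha' ⟨b, lt_of_le_of_ne h (Ne.symm hne), hab2.symm⟩
  -- Step 5: the cycle
  set k := q - p with hkdef
  have hk : 0 < k := by omega
  have hkq : k ≤ q := by omega
  set v : ℕ → Fin n := fun t => u (q - t % k) with hv
  have hvmod : ∀ t, v t = u (q - t % k) := fun t => by rw [hv]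
  have key : ∀ r, r < k → u (q - (r + 1) % k) = u (q - r - 1) := by
    intro r hr
    rcases eq_or_lt_of_le (Nat.succ_le_of_lt hr) with h | h
    · have h' : r + 1 = k := h
      have h1 : (r + 1) % k = 0 := by rw [h', Nat.mod_self]
      have h2 : q - r - 1 = p := by omega
      rw [h1, h2, Nat.sub_zero, ← hupq]
    · have h1 : (r + 1) % k = r + 1 := Nat.mod_eq_of_lt h
      rw [h1]
      exact congrArg u (by omega)
  have hv1 : ∀ t, v (t + 1) = u (q - t % k - 1) := by
    intro t
    have hr : t % k < k := Nat.mod_lt _ hk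
    rw [hvmod]
    rw [← Nat.mod_add_mod]
    exact key _ hr
  have hper : ∀ t, v (t + k) = v t := by
    intro t
    rw [hvmod, hvmod, Nat.add_mod_right]
  have harcv : ∀ t, A (v t) (v (t + 1)) := by
    intro t
    have hr : t % k < k := Nat.mod_lt _ hk
    rw [hv1, hvmod]
    have h3 : u (q - t % k) = u (q - t % k - 1 + 1) := congrArg u (by omega)
    rw [h3]
    exact harc _
  have hsigv : ∀ t, σ (v t) (v (t + 1)) = 0 ∨
      σ (v t) (v (t + 1)) * e (v t) = e (v (t + 1)) := by
    intro t
    have hr : t % k < k := Nat.mod_lt _ hk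
    rw [hv1, hvmod]
    have h3 : u (q - t % k) = u (q - t % k - 1 + 1) := congrArg u (by omega)
    rw [h3]
    exact hsig _
  have hvinj : ∀ t1 t2, t1 < k → t2 < k → v t1 = v t2 → t1 = t2 := by
    intro t1 t2 h1 h2 heqv
    rw [hvmod, hvmod, Nat.mod_eq_of_lt h1, Nat.mod_eq_of_lt h2] at heqv
    rcases Nat.eq_zero_or_pos t1 with rfl | h1p <;> rcases Nat.eq_zero_or_pos t2 with rfl | h2p
    · rfl
    · rw [Nat.sub_zero, ← hupq] at heqv
      have := huinj p (q - t2) hpq (by omega) heqv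
      omega
    · rw [Nat.sub_zero, ← hupq] at heqv
      have := huinj (q - t1) p (by omega) hpq heqv
      omega
    · have := huinj (q - t1) (q - t2) (by omega) (by omega) heqv
      omega
  -- telescoping sign product
  have htel : ∀ b, (∏ t ∈ Finset.range b, σ (v t) (v (t + 1))) = 0 ∨
      (∏ t ∈ Finset.range b, σ (v t) (v (t + 1))) = e (v 0) * e (v b) := by
    intro b
    induction b with
    | zero =>
      right
      rw [Finset.range_zero, Finset.prod_empty]
      exact (he2 (v 0)).symm
    | succ b ih =>
      rw [Finset.prod_range_succ]
      rcases hsigv b with h0 | h0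
      · left; rw [h0, mul_zero]
      · rcases ih with h1 | h1
        · left; rw [h1, zero_mul]
        · right
          rw [h1]
          have hσval : σ (v b) (v (b + 1)) = e (v b) * e (v (b + 1)) := by
            calc σ (v b) (v (b + 1))
                = σ (v b) (v (b + 1)) * (e (v b) * e (v b)) := by
                  rw [he2 (v b), mul_one]
              _ = (σ (v b) (v (b + 1)) * e (v b)) * e (v b) := by ring
              _ = e (v (b + 1)) * e (v b) := by rw [h0]
              _ = e (v b) * e (v (b + 1)) := mul_comm _ _
          rw [hσval]
          calc e (v 0) * e (v b) * (e (v b) * e (v (b + 1)))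
              = e (v 0) * (e (v b) * e (v b)) * e (v (b + 1)) := by ring
            _ = e (v 0) * e (v (b + 1)) := by rw [he2 (v b), mul_one]
  have hnn : 0 ≤ ∏ t ∈ Finset.range k, σ (v t) (v (t + 1)) := by
    rcases htel k with h | h
    · rw [h]
    · rw [h]
      have hvk : v k = v 0 := by
        have := hper 0
        rwa [Nat.zero_add] at this
      rw [hvk, he2 (v 0)]
      norm_num
  -- cardinality bound
  have hcard2 : k ≤ Δ.card := by
    have hsub : ∀ m ∈ Finset.Ico p q, u m ∈ Δ := by
      intro m _
      simp only [hΔ, Finset.mem_filter, Finset.mem_univ, true_and]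
      exact huΔ m
    have hinj2 : Set.InjOn u (Finset.Ico p q) := by
      intro a1 ha1 a2 ha2 h12
      simp only [Finset.coe_Ico, Set.mem_Ico] at ha1 ha2
      exact huinj a1 a2 ha1.2 ha2.2 h12
    have hle := Finset.card_le_card_of_injOn u hsub hinj2
    rw [Nat.card_Ico] at hle
    omega
  exact le_trans (hγ k v hk hper harcv hvinj hnn) hcard2
end

section
/- Let D^+ be a positive digraph (all arcs signed +1) with non-negative girth γ^+. For any f ∈ F(D^+, s) and any two distinct fixed points x, y of f, max(L(x,y), L(y,x)) ≥ γ^+, where L(x,y) = |{i : x_i < y_i}|. That is, Fix(f) is a code of minimum Max-distance at least γ^+. -/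
/-- `f ∈ F(D⁺,s)` for a positive digraph with arc relation `A` (`A j i` means an
arc from `j` to `i`, signed `+1`): each `f_i` is monotone w.r.t.
`x ≤ᵢ y ⟺ x_j ≤ y_j` for all in-neighbours `j` of `i`. -/
def memFpos {n s : ℕ} (A : Fin n → Fin n → Prop)
    (f : (Fin n → Fin s) → Fin n → Fin s) : Prop :=
  ∀ (i : Fin n) (x y : Fin n → Fin s), (∀ j, A j i → x j ≤ y j) → f x i ≤ f y i

/-- `L(x,y) = |{i : x_i < y_i}|`. -/
def Lcnt {n s : ℕ} (x y : Fin n → Fin s) : ℕ :=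
  (Finset.univ.filter fun i => x i < y i).card

/-- If every vertex of a nonempty finset `I` has an in-neighbour in `I`, then `I`
contains a simple cycle, hence `γ ≤ I.card`. -/
lemma cycle_bound {n γ : ℕ} (A : Fin n → Fin n → Prop)
    (hγ : ∀ (k : ℕ) (v : ℕ → Fin n), 0 < k → (∀ t, v (t + k) = v t) →
      (∀ t, A (v t) (v (t + 1))) →
      (∀ t1 t2, t1 < k → t2 < k → v t1 = v t2 → t1 = t2) → γ ≤ k)
    (I : Finset (Fin n)) (hne : I.Nonempty)
    (hstep : ∀ i ∈ I, ∃ j, j ∈ I ∧ A j i) : γ ≤ I.card := by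
  classical
  obtain ⟨i0, hi0⟩ := hne
  -- a nondependent successor function
  have hG : ∃ G : Fin n → Fin n, ∀ i ∈ I, G i ∈ I ∧ A (G i) i := by
    refine ⟨fun i => if h : i ∈ I then (hstep i h).choose else i0, fun i hi => ?_⟩
    simp only [dif_pos hi]
    exact (hstep i hi).choose_spec
  obtain ⟨G, hGspec⟩ := hG
  set w : ℕ → Fin n := fun t => G^[t] i0 with hw
  have hwsucc : ∀ t, w (t + 1) = G (w t) := by
    intro t; simp [hw, Function.iterate_succ_apply']
  have hwI : ∀ t, w t ∈ I := by
    intro t; induction t with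
    | zero => exact hi0
    | succ t ih => rw [hwsucc]; exact (hGspec _ ih).1
  have harc : ∀ t, A (w (t + 1)) (w t) := by
    intro t; rw [hwsucc]; exact (hGspec _ (hwI t)).2
  -- pigeonhole: a repeated vertex
  haveI : Nonempty (Fin n) := ⟨i0⟩
  have hex : ∃ b, ∃ a, a < b ∧ w a = w b := by
    obtain ⟨a, b, hab, heq⟩ := Finite.exists_ne_map_eq_of_infinite w
    rcases lt_or_gt_of_ne hab with h | h
    · exact ⟨b, a, h, heq⟩
    · exact ⟨a, b, h, heq.symm⟩
  have hdec : DecidablePred (fun b => ∃ a, a < b ∧ w a = w b) :=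
    Classical.decPred _
  set b0 := Nat.find hex with hb0
  obtain ⟨a, hab, hwab⟩ := Nat.find_spec hex
  have hmin : ∀ m, m < b0 → ¬ ∃ a', a' < m ∧ w a' = w m := by
    intro m hm; exact Nat.find_min hex hm
  set k := b0 - a with hkdef
  have hk : 0 < k := by omega
  set v : ℕ → Fin n := fun t => w (b0 - t % k) with hv
  have hper : ∀ t, v (t + k) = v t := by
    intro t; simp [hv, Nat.add_mod_right]
  have harc' : ∀ t, A (v t) (v (t + 1)) := by
    intro t
    have hr : t % k < k := Nat.mod_lt _ hk
    have h1 : (t + 1) % k = (t % k + 1) % k := (Nat.mod_add_mod t k 1).symm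
    show A (w (b0 - t % k)) (w (b0 - (t + 1) % k))
    by_cases hc : t % k + 1 = k
    · have e2 : (t + 1) % k = 0 := by rw [h1, hc, Nat.mod_self]
      have e1 : b0 - t % k = a + 1 := by omega
      rw [e2, e1, Nat.sub_zero, ← hwab]
      exact harc a
    · have hlt : t % k + 1 < k := by omega
      have e2 : (t + 1) % k = t % k + 1 := by rw [h1]; exact Nat.mod_eq_of_lt hlt
      have e1 : b0 - t % k = (b0 - (t % k + 1)) + 1 := by omega
      rw [e2, e1]
      exact harc _
  have key : ∀ s1 s2, s1 < s2 → s2 < k → w (b0 - s1) ≠ w (b0 - s2) := by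
    intro s1 s2 hlt hk2 heq
    rcases Nat.eq_zero_or_pos s1 with h0 | hpos
    · subst h0
      rw [Nat.sub_zero] at heq
      have h1 : a < b0 - s2 := by omega
      have h2 : b0 - s2 < b0 := by omega
      exact hmin (b0 - s2) h2 ⟨a, h1, hwab.trans heq⟩
    · have h2 : b0 - s1 < b0 := by omega
      exact hmin (b0 - s1) h2 ⟨b0 - s2, by omega, heq.symm⟩
  have hinj : ∀ t1 t2, t1 < k → t2 < k → v t1 = v t2 → t1 = t2 := by
    intro t1 t2 h1 h2 heq
    have e1 : v t1 = w (b0 - t1) := by simp [hv, Nat.mod_eq_of_lt h1]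
    have e2 : v t2 = w (b0 - t2) := by simp [hv, Nat.mod_eq_of_lt h2]
    rw [e1, e2] at heq
    by_contra hne
    rcases Nat.lt_or_ge t1 t2 with h | h
    · exact key t1 t2 h h2 heq
    · exact key t2 t1 (by omega) h1 heq.symm
  have hγk : γ ≤ k := hγ k v hk hper harc' hinj
  have hkcard : k ≤ I.card := by
    have := Finset.card_le_card_of_injOn v
      (fun t _ => hwI (b0 - t % k)) (s := Finset.range k) (t := I) ?_
    · simpa using this
    · intro t1 ht1 t2 ht2 heq
      exact hinj t1 t2 (Finset.mem_range.mp ht1) (Finset.mem_range.mp ht2) heq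
  omega

/-- for a positive digraph `D⁺` all of whose (simple) cycles have
length at least `γ⁺`, any two distinct fixed points `x, y` of any `f ∈ F(D⁺,s)`
satisfy `max(L(x,y), L(y,x)) ≥ γ⁺`: `Fix(f)` has minimum Max-distance `≥ γ⁺`. -/
theorem stmt11 (n s γ : ℕ) (hs : 2 ≤ s)
    (A : Fin n → Fin n → Prop)
    (hγ : ∀ (k : ℕ) (v : ℕ → Fin n), 0 < k → (∀ t, v (t + k) = v t) →
      (∀ t, A (v t) (v (t + 1))) →
      (∀ t1 t2, t1 < k → t2 < k → v t1 = v t2 → t1 = t2) → γ ≤ k) :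
    ∀ f : (Fin n → Fin s) → Fin n → Fin s, memFpos A f →
      ∀ x y : Fin n → Fin s, f x = x → f y = y → x ≠ y →
        γ ≤ max (Lcnt x y) (Lcnt y x) := by
  intro f hf x y hx hy hxy
  classical
  have step : ∀ (u v : Fin n → Fin s), f u = u → f v = v →
      ∀ i ∈ Finset.univ.filter (fun i => u i < v i),
        ∃ j, j ∈ Finset.univ.filter (fun i => u i < v i) ∧ A j i := by
    intro u v hu hv i hi
    have hiuv : u i < v i := (Finset.mem_filter.mp hi).2
    by_contra hcon
    push_neg at hcon
    have hle : ∀ j, A j i → v j ≤ u j := by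
      intro j hj
      by_contra hlt
      exact hcon j (Finset.mem_filter.mpr ⟨Finset.mem_univ j, lt_of_not_ge hlt⟩) hj
    have := hf i v u hle
    rw [hu, hv] at this
    exact absurd hiuv (not_lt.mpr this)
  have hne : ∃ i, x i ≠ y i := by
    by_contra h
    push_neg at h
    exact hxy (funext h)
  obtain ⟨i, hi⟩ := hne
  rcases lt_or_gt_of_ne hi with h | h
  · have : γ ≤ Lcnt x y := by
      refine cycle_bound A hγ _ ⟨i, Finset.mem_filter.mpr ⟨Finset.mem_univ i, h⟩⟩
        (step x y hx hy)
    exact le_trans this (le_max_left _ _)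
  · have : γ ≤ Lcnt y x := by
      refine cycle_bound A hγ _ ⟨i, Finset.mem_filter.mpr ⟨Finset.mem_univ i, h⟩⟩
        (step y x hy hx)
    exact le_trans this (le_max_right _ _)
end

section
/- Let D^- be a negative digraph (all arcs signed −1) with non-negative girth γ^+ (necessarily γ^+ is even, being the minimum length of an even cycle). For any f ∈ F(D^-, s) and any two distinct fixed points x, y of f, min(L(x,y), L(y,x)) ≥ γ^+/2. -/
/-- `f ∈ F(D⁻,s)` for a negative digraph with arc relation `A` (`A j i` means an
arc from `j` to `i`, signed `−1`): each `f_i` is monotone w.r.t.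
`x ≤ᵢ y ⟺ x_j ≥ y_j` for all in-neighbours `j` of `i`. -/
def memFneg {n s : ℕ} (A : Fin n → Fin n → Prop)
    (f : (Fin n → Fin s) → Fin n → Fin s) : Prop :=
  ∀ (i : Fin n) (x y : Fin n → Fin s), (∀ j, A j i → y j ≤ x j) → f x i ≤ f y i

/-!
At a coordinate `i` with `x i < y i`, monotonicity of `f i` and `f x = x`, `f y = y` force an
in-neighbour `j` with `y j < x j`, and symmetrically. Repeatedly stepping to such an in-neighbour
from a coordinate where `x` and `y` differ, the walk eventually runs around a cycle of `D⁻`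
(backwards) whose vertices alternate between `{x < y}` and `{y < x}`. That cycle is simple and
even, so its length `k` is at least `γ`, and `k / 2` of its vertices lie in each of the two sets.
-/

open Function Finset

def IsSimpleClosedWalk {α : Type*} (A : α → α → Prop) (k : ℕ) (v : ℕ → α) : Prop :=
  (∀ t, v (t + k) = v t) ∧ (∀ t, A (v t) (v (t + 1))) ∧
    ∀ t₁ t₂, t₁ < k → t₂ < k → v t₁ = v t₂ → t₁ = t₂

section Orbit

variable {α : Type*} {g : α → α} {s : Set α} {i : α}

theorem exists_iterate_mem_periodicPts [Finite α] (g : α → α) (i : α) :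
    ∃ a, g^[a] i ∈ periodicPts g := by
  obtain ⟨a, b, hab, h⟩ := Finite.exists_ne_map_eq_of_infinite fun m : ℕ => g^[m] i
  wlog hlt : a < b generalizing a b
  · exact this b a hab.symm h.symm (by omega)
  refine ⟨a, b - a, by omega, ?_⟩
  change g^[b - a] (g^[a] i) = g^[a] i
  rw [← iterate_add_apply, Nat.sub_add_cancel hlt.le]
  exact h.symm

/-- Along a cycle of length `k`, `g^[(k - 1) * t]` acts as `g^[-t]`: the orbit is walked
backwards, so the arcs `R (g j) j` become forward arcs. -/
theorem isSimpleClosedWalk_reverse_orbit {R : α → α → Prop} (hs : Set.MapsTo g s s)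
    (hR : ∀ j ∈ s, R (g j) j) (hi : i ∈ s) (hper : i ∈ periodicPts g) :
    IsSimpleClosedWalk R (minimalPeriod g i)
      fun t => g^[(minimalPeriod g i - 1) * t] i := by
  set k := minimalPeriod g i
  have hk : 0 < k := minimalPeriod_pos_of_mem_periodicPts hper
  refine ⟨fun t => ?_, fun t => ?_, fun a b ha hb hab => ?_⟩ <;> dsimp only at *
  · rw [← iterate_mod_minimalPeriod_eq, mul_add, Nat.add_mul_mod_self_right,
      iterate_mod_minimalPeriod_eq]
  · have hshift : (k - 1) * t + k = (k - 1) * (t + 1) + 1 := by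
      rw [mul_add]; omega
    have := hR _ (hs.iterate ((k - 1) * (t + 1)) hi)
    rwa [← iterate_succ_apply' g, Nat.succ_eq_add_one, ← hshift, iterate_add_apply,
      iterate_minimalPeriod] at this
  · rw [← iterate_mod_minimalPeriod_eq (n := (k - 1) * a),
      ← iterate_mod_minimalPeriod_eq (n := (k - 1) * b),
      iterate_eq_iterate_iff_of_lt_minimalPeriod (Nat.mod_lt _ hk) (Nat.mod_lt _ hk)] at hab
    have hcop : Nat.gcd k (k - 1) = 1 :=
      (Nat.coprime_self_sub_right hk).mpr (Nat.coprime_one_right k)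
    exact (Nat.ModEq.cancel_left_of_coprime hcop hab).eq_of_lt_of_lt ha hb

variable {p : α → Prop}

theorem iterate_iff_even_of_flip (hs : Set.MapsTo g s s) (hp : ∀ j ∈ s, p (g j) ↔ ¬ p j)
    (hi : i ∈ s) (m : ℕ) : p (g^[m] i) ↔ (p i ↔ Even m) := by
  induction m with
  | zero => simp
  | succ m ih =>
    rw [iterate_succ_apply', hp _ (hs.iterate m hi), ih, Nat.even_add_one]
    tauto

theorem even_minimalPeriod_of_flip (hs : Set.MapsTo g s s) (hp : ∀ j ∈ s, p (g j) ↔ ¬ p j)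
    (hi : i ∈ s) : Even (minimalPeriod g i) := by
  have := iterate_iff_even_of_flip hs hp hi (minimalPeriod g i)
  rw [iterate_minimalPeriod] at this
  tauto

theorem minimalPeriod_div_two_le_card_of_flip [Fintype α] [DecidablePred p]
    (hs : Set.MapsTo g s s) (hp : ∀ j ∈ s, p (g j) ↔ ¬ p j) (hi : i ∈ s)
    (hper : i ∈ periodicPts g) : minimalPeriod g i / 2 ≤ #{j | p j} := by
  wlog hpi : p i generalizing i
  · rw [← minimalPeriod_apply hper]
    exact this (hs hi) (mk_mem_periodicPts (minimalPeriod_pos_of_mem_periodicPts hper)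
      (isPeriodicPt_minimalPeriod g i).apply) ((hp i hi).mpr hpi)
  have hinj : Set.InjOn (fun m => g^[2 * m] i) (range (minimalPeriod g i / 2)) := by
    intro a ha b hb hab
    simp only [coe_range, Set.mem_Iio] at ha hb
    have := iterate_injOn_Iio_minimalPeriod (f := g) (x := i)
      (show 2 * a < minimalPeriod g i by omega) (show 2 * b < minimalPeriod g i by omega) hab
    omega
  have hmaps :
      ∀ m ∈ range (minimalPeriod g i / 2), g^[2 * m] i ∈ ({j | p j} : Finset α) := by
    intro m _
    simp [iterate_iff_even_of_flip hs hp hi, hpi]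
  simpa using card_le_card_of_injOn _ hmaps hinj

end Orbit

theorem memFneg.exists_arc_lt_of_lt {n s : ℕ} {A : Fin n → Fin n → Prop}
    {f : (Fin n → Fin s) → Fin n → Fin s} (hf : memFneg A f) {x y : Fin n → Fin s}
    (hx : f x = x) (hy : f y = y) {i : Fin n} (hi : x i < y i) : ∃ j, A j i ∧ y j < x j := by
  by_contra! h
  have := hf i y x h
  rw [hx, hy] at this
  exact this.not_gt hi

theorem div_two_le_Lcnt_of_fixedPt {n s γ : ℕ} {A : Fin n → Fin n → Prop}
    (hγ : ∀ k v, 0 < k → Even k → IsSimpleClosedWalk A k v → γ ≤ k)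
    {f : (Fin n → Fin s) → Fin n → Fin s} (hf : memFneg A f) {x y : Fin n → Fin s}
    (hx : f x = x) (hy : f y = y) (hxy : x ≠ y) : γ / 2 ≤ Lcnt x y := by
  classical
  set D : Set (Fin n) := {i | x i ≠ y i}
  have hstep : ∀ i ∈ D, ∃ j, A j i ∧ j ∈ D ∧ (x j < y j ↔ ¬ x i < y i) := by
    intro i hi
    rcases Ne.lt_or_gt hi with h | h
    · obtain ⟨j, hA, hj⟩ := hf.exists_arc_lt_of_lt hx hy h
      exact ⟨j, hA, hj.ne', by simp [h, hj.le.not_gt]⟩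
    · obtain ⟨j, hA, hj⟩ := hf.exists_arc_lt_of_lt hy hx h
      exact ⟨j, hA, hj.ne, by simp [hj, h.le.not_gt]⟩
  obtain ⟨i₀, hi₀⟩ := Function.ne_iff.mp hxy
  choose! g hgA hgD hgflip using hstep
  replace hgD : Set.MapsTo g D D := hgD
  obtain ⟨a, hper⟩ := exists_iterate_mem_periodicPts g i₀
  have hi : g^[a] i₀ ∈ D := hgD.iterate a hi₀
  have hk : 0 < minimalPeriod g (g^[a] i₀) := minimalPeriod_pos_of_mem_periodicPts hper
  have heven : Even (minimalPeriod g (g^[a] i₀)) :=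
    even_minimalPeriod_of_flip (p := fun j => x j < y j) hgD hgflip hi
  calc γ / 2 ≤ minimalPeriod g (g^[a] i₀) / 2 :=
        Nat.div_le_div_right <| hγ _ _ hk heven (isSimpleClosedWalk_reverse_orbit hgD hgA hi hper)
    _ ≤ Lcnt x y := minimalPeriod_div_two_le_card_of_flip hgD hgflip hi hper

theorem stmt12_general (n s γ : ℕ)
    (A : Fin n → Fin n → Prop)
    (hγ : ∀ (k : ℕ) (v : ℕ → Fin n), 0 < k → Even k → (∀ t, v (t + k) = v t) →
      (∀ t, A (v t) (v (t + 1))) →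
      (∀ t1 t2, t1 < k → t2 < k → v t1 = v t2 → t1 = t2) → γ ≤ k) :
    ∀ f : (Fin n → Fin s) → Fin n → Fin s, memFneg A f →
      ∀ x y : Fin n → Fin s, f x = x → f y = y → x ≠ y →
        γ / 2 ≤ min (Lcnt x y) (Lcnt y x) := by
  intro f hf x y hx hy hxy
  have hγ' : ∀ k v, 0 < k → Even k → IsSimpleClosedWalk A k v → γ ≤ k :=
    fun k v hk he hv => hγ k v hk he hv.1 hv.2.1 hv.2.2
  exact le_min (div_two_le_Lcnt_of_fixedPt hγ' hf hx hy hxy)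
    (div_two_le_Lcnt_of_fixedPt hγ' hf hy hx hxy.symm)

/-- for a negative digraph `D⁻` whose even (i.e. non-negative)
simple cycles all have length at least `γ⁺` (with `γ⁺` even), any two distinct
fixed points `x, y` of any `f ∈ F(D⁻,s)` satisfy `min(L(x,y), L(y,x)) ≥ γ⁺/2`. -/
theorem stmt12 (n s γ : ℕ) (hs : 2 ≤ s) (hγe : Even γ)
    (A : Fin n → Fin n → Prop)
    (hγ : ∀ (k : ℕ) (v : ℕ → Fin n), 0 < k → Even k → (∀ t, v (t + k) = v t) →
      (∀ t, A (v t) (v (t + 1))) →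
      (∀ t1 t2, t1 < k → t2 < k → v t1 = v t2 → t1 = t2) → γ ≤ k) :
    ∀ f : (Fin n → Fin s) → Fin n → Fin s, memFneg A f →
      ∀ x y : Fin n → Fin s, f x = x → f y = y → x ≠ y →
        γ / 2 ≤ min (Lcnt x y) (Lcnt y x) :=
  stmt12_general n s γ A hγ
end

section
/- Let D be a signed digraph on [n] and define φ := max_i min{(n − d_i^0 + 1)/2, n − d_i^0 − d_i^− + 1, n − d_i^0 − d_i^+ + 1}. Then any code C ⊆ [s]^n with minimum min-distance d_m at least φ is an independent set of the guessing graph G(D,s), and hence is contained in the set of fixed points of some f ∈ F(D,s). -/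
/-- In-degree of `i` via arcs of sign `a`. -/
def dSign {n : ℕ} (A : Fin n → Fin n → Prop) [DecidableRel A]
    (σ : Fin n → Fin n → ℤ) (a : ℤ) (i : Fin n) : ℕ :=
  (Finset.univ.filter fun j => A j i ∧ σ j i = a).card

lemma sleA_refl {n s : ℕ} (A : Fin n → Fin n → Prop) (σ : Fin n → Fin n → ℤ)
    (i : Fin n) (x : Fin n → Fin s) : sleA A σ i x x :=
  fun _ _ => ⟨fun _ => rfl, fun _ => le_refl _, fun _ => le_refl _⟩

lemma sleA_trans {n s : ℕ} {A : Fin n → Fin n → Prop} {σ : Fin n → Fin n → ℤ}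
    {i : Fin n} {x y z : Fin n → Fin s} (h1 : sleA A σ i x y) (h2 : sleA A σ i y z) :
    sleA A σ i x z := fun j hj =>
  ⟨fun h0 => ((h1 j hj).1 h0).trans ((h2 j hj).1 h0),
   fun h0 => ((h1 j hj).2.1 h0).trans ((h2 j hj).2.1 h0),
   fun h0 => ((h2 j hj).2.2 h0).trans ((h1 j hj).2.2 h0)⟩

/-- let `φ := max_i min{(n−d_i⁰+1)/2, n−d_i⁰−d_i⁻+1, n−d_i⁰−d_i⁺+1}`.
Any code `C ⊆ [s]^n` with minimum min-distance `d_m ≥ φ` (expressed as: for all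
distinct `x,y ∈ C` and all `i`, the `i`-th min-term is `≤ d_m(x,y)`) is an
independent set of `G(D,s)`, and is contained in `Fix(f)` for some `f ∈ F(D,s)`. -/
theorem stmt13 (n s : ℕ) (hn : 1 ≤ n) (hs : 2 ≤ s)
    (A : Fin n → Fin n → Prop) [DecidableRel A] (σ : Fin n → Fin n → ℤ)
    (hσ : ∀ j i, A j i → σ j i = -1 ∨ σ j i = 0 ∨ σ j i = 1)
    (C : Set (Fin n → Fin s))
    (hC : ∀ x ∈ C, ∀ y ∈ C, x ≠ y → ∀ i : Fin n,
      min (min (((n : ℚ) - dSign A σ 0 i + 1) / 2)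
            ((n : ℚ) - dSign A σ 0 i - dSign A σ (-1) i + 1))
          ((n : ℚ) - dSign A σ 0 i - dSign A σ 1 i + 1)
        ≤ (min (Lcnt x y) (Lcnt y x) : ℚ)) :
    (∀ x ∈ C, ∀ y ∈ C, x ≠ y →
      ∃ f : (Fin n → Fin s) → Fin n → Fin s, memFA A σ f ∧ f x = x ∧ f y = y) ∧
    (∃ f : (Fin n → Fin s) → Fin n → Fin s, memFA A σ f ∧ ∀ x ∈ C, f x = x) := by
  classical
  -- Key: C is an independent set of the guessing graph, in the strong form
  -- that `x ≤ᵢ y` forces `x i ≤ y i` for codewords.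
  have key : ∀ x ∈ C, ∀ y ∈ C, ∀ i : Fin n, sleA A σ i x y → x i ≤ y i := by
    intro x hx y hy i hle
    by_contra hlt
    push_neg at hlt
    have hne : x ≠ y := by
      intro h; subst h; exact lt_irrefl _ hlt
    have hmin := hC x hx y hy hne i
    set P := Finset.univ.filter (fun j => x j < y j) with hP
    set Q := Finset.univ.filter (fun j => y j < x j) with hQ
    set N0 := Finset.univ.filter (fun j => A j i ∧ σ j i = 0) with hN0
    set Nm := Finset.univ.filter (fun j => A j i ∧ σ j i = -1) with hNm
    set Np := Finset.univ.filter (fun j => A j i ∧ σ j i = 1) with hNp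
    have d1 : Disjoint P N0 := Finset.disjoint_left.2 (by
      intro j hjP hjN
      simp only [hP, hN0, Finset.mem_filter, Finset.mem_univ, true_and] at hjP hjN
      exact hjP.ne ((hle j hjN.1).1 hjN.2))
    have d2 : Disjoint P Nm := Finset.disjoint_left.2 (by
      intro j hjP hjN
      simp only [hP, hNm, Finset.mem_filter, Finset.mem_univ, true_and] at hjP hjN
      exact absurd hjP (not_lt.2 ((hle j hjN.1).2.2 hjN.2)))
    have d3 : Disjoint Q N0 := Finset.disjoint_left.2 (by
      intro j hjQ hjN
      simp only [hQ, hN0, Finset.mem_filter, Finset.mem_univ, true_and] at hjQ hjN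
      exact hjQ.ne ((hle j hjN.1).1 hjN.2).symm)
    have d4 : Disjoint Q Np := Finset.disjoint_left.2 (by
      intro j hjQ hjN
      simp only [hQ, hNp, Finset.mem_filter, Finset.mem_univ, true_and] at hjQ hjN
      exact absurd hjQ (not_lt.2 ((hle j hjN.1).2.1 hjN.2)))
    have d5 : Disjoint N0 Nm := Finset.disjoint_left.2 (by
      intro j hj0 hjm
      simp only [hN0, hNm, Finset.mem_filter, Finset.mem_univ, true_and] at hj0 hjm
      rw [hj0.2] at hjm
      exact absurd hjm.2 (by decide))
    have d5' : Disjoint N0 Np := Finset.disjoint_left.2 (by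
      intro j hj0 hjp
      simp only [hN0, hNp, Finset.mem_filter, Finset.mem_univ, true_and] at hj0 hjp
      rw [hj0.2] at hjp
      exact absurd hjp.2 (by decide))
    have d6 : Disjoint P Q := Finset.disjoint_left.2 (by
      intro j hjP hjQ
      simp only [hP, hQ, Finset.mem_filter, Finset.mem_univ, true_and] at hjP hjQ
      exact lt_asymm hjP hjQ)
    have c1 : P.card + N0.card + Nm.card ≤ n := by
      have h := Finset.card_le_univ ((P ∪ N0) ∪ Nm)
      rwa [Finset.card_union_of_disjoint
            (Finset.disjoint_union_left.2 ⟨d2, d5⟩),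
          Finset.card_union_of_disjoint d1, Fintype.card_fin] at h
    have c2 : Q.card + N0.card + Np.card ≤ n := by
      have h := Finset.card_le_univ ((Q ∪ N0) ∪ Np)
      rwa [Finset.card_union_of_disjoint
            (Finset.disjoint_union_left.2 ⟨d4, d5'⟩),
          Finset.card_union_of_disjoint d3, Fintype.card_fin] at h
    have c3 : P.card + Q.card + N0.card ≤ n := by
      have h := Finset.card_le_univ ((P ∪ Q) ∪ N0)
      rwa [Finset.card_union_of_disjoint
            (Finset.disjoint_union_left.2 ⟨d1, d3⟩),
          Finset.card_union_of_disjoint d6, Fintype.card_fin] at h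
    have e0 : dSign A σ 0 i = N0.card := rfl
    have em : dSign A σ (-1) i = Nm.card := rfl
    have ep : dSign A σ 1 i = Np.card := rfl
    have eP : Lcnt x y = P.card := rfl
    have eQ : Lcnt y x = Q.card := rfl
    rw [e0, em, ep, eP, eQ] at hmin
    have hm1 : (min (P.card : ℚ) (Q.card : ℚ)) ≤ (P.card : ℚ) := min_le_left _ _
    have hm2 : (min (P.card : ℚ) (Q.card : ℚ)) ≤ (Q.card : ℚ) := min_le_right _ _
    have cq1 : (P.card : ℚ) + N0.card + Nm.card ≤ n := by exact_mod_cast c1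
    have cq2 : (Q.card : ℚ) + N0.card + Np.card ≤ n := by exact_mod_cast c2
    have cq3 : (P.card : ℚ) + Q.card + N0.card ≤ n := by exact_mod_cast c3
    rcases min_le_iff.1 hmin with h | h
    · rcases min_le_iff.1 h with h | h
      · linarith
      · linarith
    · linarith
  -- Construction of a fixing function.
  obtain ⟨f, hf, hfix⟩ : ∃ f : (Fin n → Fin s) → Fin n → Fin s,
      memFA A σ f ∧ ∀ x ∈ C, f x = x := by
    have hs0 : 0 < s := by omega
    refine ⟨fun z i => (insert (⟨0, hs0⟩ : Fin s) (Finset.univ.filter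
        (fun v => ∃ c ∈ C, sleA A σ i c z ∧ c i = v))).max'
        (Finset.insert_nonempty _ _), ?_, ?_⟩
    · intro i z w hzw
      apply Finset.max'_subset
      apply Finset.insert_subset_insert
      intro v hv
      simp only [Finset.mem_filter, Finset.mem_univ, true_and] at hv ⊢
      obtain ⟨c, hc, hle, hv⟩ := hv
      exact ⟨c, hc, sleA_trans hle hzw, hv⟩
    · intro x hx
      funext i
      apply le_antisymm
      · apply Finset.max'_le
        intro v hv
        rcases Finset.mem_insert.1 hv with rfl | hv
        · exact Fin.le_def.mpr (Nat.zero_le _)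
        · simp only [Finset.mem_filter, Finset.mem_univ, true_and] at hv
          obtain ⟨c, hc, hle, hv⟩ := hv
          exact hv ▸ key c hc x hx i hle
      · apply Finset.le_max'
        exact Finset.mem_insert_of_mem (by
          simp only [Finset.mem_filter, Finset.mem_univ, true_and]
          exact ⟨x, hx, sleA_refl A σ i x, rfl⟩)
  exact ⟨fun x hx y hy _ => ⟨f, hf, hfix x hx, hfix y hy⟩, ⟨f, hf, hfix⟩⟩
end

section
/- For every s ≥ 2, g(K_3^+, s) = log_s(⌊3(s−1)/2⌋ + 1): the maximum number of fixed points of a network on the positive triangle K_3^+ over alphabet [s] is exactly ⌊3(s−1)/2⌋ + 1. -/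
/-- `f ∈ F(K_n^+, s)`: each `f_i` is monotone w.r.t. `≤ᵢ`, where `x ≤ᵢ y` iff
`x_j ≤ y_j` for all `j ≠ i`. -/
def memFposClique {n s : ℕ} (f : (Fin n → Fin s) → Fin n → Fin s) : Prop :=
  ∀ (i : Fin n) (x y : Fin n → Fin s), (∀ j, j ≠ i → x j ≤ y j) → f x i ≤ f y i

def cc (k : ℕ) : Fin 3 → ℕ := ![k - (k+1)/3, k - k/3, k - (k+2)/3]

lemma cc_mono (i : Fin 3) {k m : ℕ} (h : k ≤ m) : cc k i ≤ cc m i := by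
  fin_cases i <;> simp [cc] <;> omega

lemma cc_weight (k : ℕ) : cc k 0 + cc k 1 + cc k 2 = 2*k := by simp [cc]; omega

lemma cc_step (i : Fin 3) (k : ℕ) : ∃ j, j ≠ i ∧ cc k j < cc (k+1) j := by
  have h01 : cc k 0 < cc (k+1) 0 ∨ cc k 1 < cc (k+1) 1 := by simp [cc]; omega
  have h02 : cc k 0 < cc (k+1) 0 ∨ cc k 2 < cc (k+1) 2 := by simp [cc]; omega
  have h12 : cc k 1 < cc (k+1) 1 ∨ cc k 2 < cc (k+1) 2 := by simp [cc]; omega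
  fin_cases i
  · rcases h12 with h|h
    exacts [⟨1, by decide, h⟩, ⟨2, by decide, h⟩]
  · rcases h02 with h|h
    exacts [⟨0, by decide, h⟩, ⟨2, by decide, h⟩]
  · rcases h01 with h|h
    exacts [⟨0, by decide, h⟩, ⟨1, by decide, h⟩]

lemma cc_le (t k : ℕ) (h : k ≤ 3*(t+1)/2) (i : Fin 3) : cc k i ≤ t+1 := by
  fin_cases i <;> simp [cc] <;> omega

lemma cc_zero (i : Fin 3) : cc 0 i = 0 := by fin_cases i <;> simp [cc]

/-- The chain element as a state in `[t+2]^3`. -/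
def ccF (t k : ℕ) (i : Fin 3) : Fin (t+2) := ⟨min (cc k i) (t+1), by omega⟩

lemma ccF_val (t k : ℕ) (hk : k ≤ 3*(t+1)/2) (i : Fin 3) : (ccF t k i : ℕ) = cc k i := by
  simp [ccF, min_eq_left (cc_le t k hk i)]

/-- The greatest index `k ≤ B` such that `c^k ≤ x` off coordinate `i`. -/
abbrev gfun {s : ℕ} (x : Fin 3 → Fin s) (i : Fin 3) (B : ℕ) : ℕ :=
  Nat.findGreatest (fun k => ∀ j, j ≠ i → cc k j ≤ (x j : ℕ)) B

/-- The network realizing the maximum number of fixed points. -/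
def myf (t : ℕ) (x : Fin 3 → Fin (t+2)) (i : Fin 3) : Fin (t+2) :=
  ⟨min (cc (gfun x i (3*(t+1)/2)) i) (t+1), by omega⟩

lemma gfun_le {s : ℕ} (x : Fin 3 → Fin s) (i : Fin 3) (B : ℕ) : gfun x i B ≤ B :=
  Nat.findGreatest_le B

lemma myf_val (t : ℕ) (x : Fin 3 → Fin (t+2)) (i : Fin 3) :
    (myf t x i : ℕ) = cc (gfun x i (3*(t+1)/2)) i := by
  have h := cc_le t _ (gfun_le x i (3*(t+1)/2)) i
  simp only [myf]
  omega

lemma myf_mem (t : ℕ) : memFposClique (myf t) := by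
  intro i x y h
  rw [Fin.le_def, myf_val, myf_val]
  refine cc_mono i (Nat.findGreatest_mono (fun k hk j hj => ?_) le_rfl)
  exact le_trans (hk j hj) (h j hj)

lemma gfun_ccF (t k : ℕ) (hk : k ≤ 3*(t+1)/2) (i : Fin 3) :
    gfun (ccF t k) i (3*(t+1)/2) = k := by
  have hP : ∀ j, j ≠ i → cc k j ≤ ((ccF t k j : ℕ)) := fun j _ => by
    rw [ccF_val t k hk]
  refine le_antisymm ?_ (Nat.le_findGreatest hk hP)
  by_contra hlt
  push_neg at hlt
  have hspec : ∀ j, j ≠ i → cc (gfun (ccF t k) i (3*(t+1)/2)) j ≤ ((ccF t k j : ℕ)) :=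
    Nat.findGreatest_spec (P := fun k' => ∀ j, j ≠ i → cc k' j ≤ ((ccF t k j : ℕ))) hk hP
  obtain ⟨j, hj, hstep⟩ := cc_step i k
  have h1 := hspec j hj
  rw [ccF_val t k hk] at h1
  have h2 := cc_mono j (show k+1 ≤ gfun (ccF t k) i (3*(t+1)/2) by omega)
  omega

lemma myf_fix_of (t k : ℕ) (hk : k ≤ 3*(t+1)/2) : myf t (ccF t k) = ccF t k := by
  funext i
  apply Fin.val_injective
  rw [myf_val, gfun_ccF t k hk, ccF_val t k hk]

lemma myf_fix_to (t : ℕ) (x : Fin 3 → Fin (t+2)) (hx : myf t x = x) :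
    ∃ k ≤ 3*(t+1)/2, x = ccF t k := by
  set B := 3*(t+1)/2 with hB
  have hxv : ∀ i, (x i : ℕ) = cc (gfun x i B) i := fun i => by
    rw [← myf_val]; rw [hx]
  set Q : ℕ → Prop := fun k => ∀ j, cc k j ≤ (x j : ℕ) with hQ
  have hQ0 : Q 0 := fun j => by rw [cc_zero]; omega
  set K : ℕ := Nat.findGreatest Q B with hK
  have hKB : K ≤ B := Nat.findGreatest_le B
  have hQK : Q K := Nat.findGreatest_spec (Nat.zero_le B) hQ0
  have hgK : ∀ i, gfun x i B = K := by
    intro i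
    have hge : K ≤ gfun x i B :=
      Nat.le_findGreatest hKB (fun j _ => hQK j)
    rcases eq_or_lt_of_le hge with h|h
    · exact h.symm
    · exfalso
      have hgB : gfun x i B ≤ B := Nat.findGreatest_le B
      have hspec : ∀ j, j ≠ i → cc (gfun x i B) j ≤ (x j : ℕ) :=
        Nat.findGreatest_spec (P := fun k => ∀ j, j ≠ i → cc k j ≤ (x j : ℕ))
          (Nat.zero_le B) (fun j _ => le_of_eq_of_le (cc_zero j) (Nat.zero_le _))
      have hQK1 : Q (K+1) := by
        intro j
        by_cases hj : j = i
        · subst hj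
          rw [hxv j]
          exact cc_mono j (by omega)
        · exact le_trans (cc_mono j (by omega)) (hspec j hj)
      have := Nat.le_findGreatest (m := K+1) (n := B) (by omega) hQK1
      omega
  refine ⟨K, hKB, ?_⟩
  funext i
  apply Fin.val_injective
  rw [hxv i, hgK i, ccF_val t K hKB]

lemma ccF_injOn (t : ℕ) : Set.InjOn (ccF t) ↑(Finset.range (3*(t+1)/2 + 1)) := by
  intro k hk m hm h
  simp only [Finset.coe_range, Set.mem_Iio] at hk hm
  have hk' : k ≤ 3*(t+1)/2 := by omega
  have hm' : m ≤ 3*(t+1)/2 := by omega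
  have hw : ∀ i : Fin 3, cc k i = cc m i := fun i => by
    rw [← ccF_val t k hk' i, ← ccF_val t m hm' i, h]
  have h0 := hw 0; have h1 := hw 1; have h2 := hw 2
  have := cc_weight k; have := cc_weight m
  omega

lemma myf_card (t : ℕ) :
    Set.ncard {x | myf t x = x} = 3*(t+1)/2 + 1 := by
  have hset : {x | myf t x = x} = ↑((Finset.range (3*(t+1)/2 + 1)).image (ccF t)) := by
    ext x
    simp only [Set.mem_setOf_eq, Finset.coe_image, Set.mem_image, Finset.mem_coe,
      Finset.mem_range]
    constructor
    · intro hx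
      obtain ⟨k, hk, rfl⟩ := myf_fix_to t x hx
      exact ⟨k, by omega, rfl⟩
    · rintro ⟨k, hk, rfl⟩
      exact myf_fix_of t k (by omega)
  rw [hset, Set.ncard_coe_finset, Finset.card_image_of_injOn (ccF_injOn t),
    Finset.card_range]

lemma fixed_le {s : ℕ} (hs : 2 ≤ s) (f : (Fin 3 → Fin s) → Fin 3 → Fin s)
    (hf : memFposClique f) :
    Set.ncard {x | f x = x} ≤ 3 * (s - 1) / 2 + 1 := by
  set S : Set (Fin 3 → Fin s) := {x | f x = x} with hS
  have key : ∀ x ∈ S, ∀ y ∈ S, ∀ i j k : Fin 3, (∀ l, l = i ∨ l = j ∨ l = k) →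
      (x j : ℕ) ≤ y j → (x k : ℕ) ≤ y k → (x i : ℕ) ≤ y i := by
    intro x hx y hy i j k hcov hj hk
    have h := hf i x y (fun l hl => by
      rcases hcov l with rfl|rfl|rfl
      · exact absurd rfl hl
      · exact Fin.le_def.mpr hj
      · exact Fin.le_def.mpr hk)
    rw [hx, hy] at h
    exact Fin.le_def.mp h
  have gap : ∀ x ∈ S, ∀ y ∈ S, x ≠ y →
      ((x 0 : ℕ) + x 1 + x 2) + 2 ≤ ((y 0 : ℕ) + y 1 + y 2) ∨
      ((y 0 : ℕ) + y 1 + y 2) + 2 ≤ ((x 0 : ℕ) + x 1 + x 2) := by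
    intro x hx y hy hne
    have hne' : (x 0 : ℕ) ≠ y 0 ∨ (x 1 : ℕ) ≠ y 1 ∨ (x 2 : ℕ) ≠ y 2 := by
      by_contra h
      push_neg at h
      exact hne (funext fun i => by
        fin_cases i <;> exact Fin.val_injective (by tauto))
    have a0 := key x hx y hy 0 1 2 (by decide)
    have a1 := key x hx y hy 1 0 2 (by decide)
    have a2 := key x hx y hy 2 0 1 (by decide)
    have b0 := key y hy x hx 0 1 2 (by decide)
    have b1 := key y hy x hx 1 0 2 (by decide)
    have b2 := key y hy x hx 2 0 1 (by decide)
    omega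
  set Φ : (Fin 3 → Fin s) → ℕ := fun x => ((x 0 : ℕ) + x 1 + x 2) / 2 with hΦ
  have hinj : Set.InjOn Φ S := by
    intro x hx y hy h
    by_contra hne
    rcases gap x hx y hy hne with hg|hg <;> simp only [hΦ] at h <;> omega
  have hmaps : ∀ x ∈ S, Φ x ∈ Finset.range (3 * (s - 1) / 2 + 1) := by
    intro x _
    have h0 := (x 0).is_lt; have h1 := (x 1).is_lt; have h2 := (x 2).is_lt
    simp only [Finset.mem_range, hΦ]
    omega
  calc S.ncard = (Φ '' S).ncard := (Set.ncard_image_of_injOn hinj).symm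
    _ ≤ (↑(Finset.range (3 * (s - 1) / 2 + 1)) : Set ℕ).ncard := by
        refine Set.ncard_le_ncard ?_ (Finset.range _).finite_toSet
        rintro _ ⟨x, hx, rfl⟩
        exact hmaps x hx
    _ = 3 * (s - 1) / 2 + 1 := by rw [Set.ncard_coe_finset, Finset.card_range]


/-- for every `s ≥ 2`, the maximum number of fixed points of a
network on the positive triangle `K_3^+` over alphabet `[s]` is exactly
`⌊3(s−1)/2⌋ + 1`, i.e. `g(K_3^+, s) = log_s(⌊3(s−1)/2⌋ + 1)`. -/
theorem stmt16 (s : ℕ) (hs : 2 ≤ s) :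
    IsGreatest {m : ℕ | ∃ f : (Fin 3 → Fin s) → Fin 3 → Fin s,
        memFposClique f ∧ m = Set.ncard {x | f x = x}}
      (3 * (s - 1) / 2 + 1) := by
  obtain ⟨t, rfl⟩ : ∃ t, s = t + 2 := ⟨s - 2, by omega⟩
  constructor
  · refine ⟨myf t, myf_mem t, ?_⟩
    rw [myf_card t]
    congr 1
  · rintro m ⟨f, hf, rfl⟩
    exact fixed_le hs f hf
end

section
/- Fix n and integers m_0, m_1, m_2. Let C ⊆ [s]^n be the set of x with Σ_i x_i = m_0, Σ_i i·x_i = m_1, and Σ_i i²·x_i = m_2. Then for any distinct x, y ∈ C, min(L(x,y), L(y,x)) ≥ 2; in particular L(x,y) ≠ 1 and L(y,x) ≠ 1, so C is an independent set in the guessing graph G(K_n^+, s). -/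
lemma key {n s : ℕ} (x y : Fin n → Fin s)
    (e0 : ∑ i, (x i : ℕ) = ∑ i, (y i : ℕ))
    (e1 : ∑ i : Fin n, ((i : ℕ) + 1) * (x i : ℕ) = ∑ i : Fin n, ((i : ℕ) + 1) * (y i : ℕ))
    (e2 : ∑ i : Fin n, ((i : ℕ) + 1) ^ 2 * (x i : ℕ) = ∑ i : Fin n, ((i : ℕ) + 1) ^ 2 * (y i : ℕ))
    (hxy : x ≠ y) : 2 ≤ Lcnt x y := by
  set z : Fin n → ℤ := fun i => ((y i : ℕ) : ℤ) - ((x i : ℕ) : ℤ) with hz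
  have h0 : ∑ i, z i = 0 := by
    simp only [hz, Finset.sum_sub_distrib]
    rw [sub_eq_zero]
    exact_mod_cast e0.symm
  have h1 : ∑ i : Fin n, (((i : ℕ) : ℤ) + 1) * z i = 0 := by
    simp only [hz, mul_sub, Finset.sum_sub_distrib]
    rw [sub_eq_zero]
    exact_mod_cast e1.symm
  have h2 : ∑ i : Fin n, (((i : ℕ) : ℤ) + 1) ^ 2 * z i = 0 := by
    simp only [hz, mul_sub, Finset.sum_sub_distrib]
    rw [sub_eq_zero]
    exact_mod_cast e2.symm
  by_contra hlt
  push_neg at hlt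
  interval_cases hc : Lcnt x y
  · -- no coordinate with x i < y i, so z i ≤ 0 everywhere
    have hempty : ∀ i : Fin n, ¬ x i < y i := by
      intro i hi
      have : i ∈ Finset.univ.filter fun i => x i < y i := by
        simp [hi]
      have hpos := Finset.card_pos.mpr ⟨i, this⟩
      rw [Lcnt] at hc
      omega
    have hnp : ∀ i ∈ (Finset.univ : Finset (Fin n)), z i ≤ 0 := by
      intro i _
      have := hempty i
      simp only [hz]
      have : (y i : ℕ) ≤ (x i : ℕ) := by
        by_contra hcon
        exact this (Fin.lt_def.mpr (by omega))
      omega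
    have := (Finset.sum_eq_zero_iff_of_nonpos hnp).mp h0
    apply hxy
    funext i
    have hi := this i (Finset.mem_univ i)
    have : (x i : ℕ) = (y i : ℕ) := by simp only [hz] at hi; omega
    exact Fin.ext this
  · -- exactly one coordinate a with x a < y a
    obtain ⟨a, ha⟩ := Finset.card_eq_one.mp hc
    have haA : x a < y a := by
      have : a ∈ Finset.univ.filter fun i => x i < y i := ha ▸ Finset.mem_singleton_self a
      simpa using this
    have hother : ∀ i : Fin n, i ≠ a → ¬ x i < y i := by
      intro i hia hcon
      have : i ∈ Finset.univ.filter fun i => x i < y i := by simp [hcon]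
      rw [ha, Finset.mem_singleton] at this
      exact hia this
    have hS : ∑ i : Fin n, (((i : ℕ) : ℤ) - ((a : ℕ) : ℤ)) ^ 2 * z i = 0 := by
      have expand : ∑ i : Fin n, (((i : ℕ) : ℤ) - ((a : ℕ) : ℤ)) ^ 2 * z i
          = ∑ i : Fin n, ((((i : ℕ) : ℤ) + 1) ^ 2 * z i)
            - (2 * (((a : ℕ) : ℤ) + 1)) * ∑ i : Fin n, ((((i : ℕ) : ℤ) + 1) * z i)
            + (((a : ℕ) : ℤ) + 1) ^ 2 * ∑ i : Fin n, z i := by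
        rw [Finset.mul_sum, Finset.mul_sum, ← Finset.sum_sub_distrib, ← Finset.sum_add_distrib]
        apply Finset.sum_congr rfl
        intro i _
        ring
      rw [expand, h0, h1, h2]; ring
    have hnp : ∀ i ∈ (Finset.univ : Finset (Fin n)),
        (((i : ℕ) : ℤ) - ((a : ℕ) : ℤ)) ^ 2 * z i ≤ 0 := by
      intro i _
      by_cases hia : i = a
      · subst hia; simp
      · have h1 := hother i hia
        have hle : (y i : ℕ) ≤ (x i : ℕ) := by
          by_contra hcon
          exact h1 (Fin.lt_def.mpr (by omega))
        have hzle : z i ≤ 0 := by simp only [hz]; omega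
        exact mul_nonpos_of_nonneg_of_nonpos (sq_nonneg _) hzle
    have hall := (Finset.sum_eq_zero_iff_of_nonpos hnp).mp hS
    have hzero : ∀ i : Fin n, i ≠ a → z i = 0 := by
      intro i hia
      have := hall i (Finset.mem_univ i)
      have hne : (((i : ℕ) : ℤ) - ((a : ℕ) : ℤ)) ^ 2 ≠ 0 := by
        have : (i : ℕ) ≠ (a : ℕ) := fun h => hia (Fin.ext h)
        have : (((i : ℕ) : ℤ)) ≠ ((a : ℕ) : ℤ) := by exact_mod_cast this
        exact pow_ne_zero 2 (sub_ne_zero.mpr this)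
      exact (mul_eq_zero.mp this).resolve_left hne
    have hsum : ∑ i, z i = z a := by
      apply Finset.sum_eq_single a
      · intro b _ hb; exact hzero b hb
      · intro h; exact absurd (Finset.mem_univ a) h
    rw [hsum] at h0
    have : (x a : ℕ) < (y a : ℕ) := haA
    simp only [hz] at h0
    omega

lemma exists_ne_of_two_le {n s : ℕ} {x y : Fin n → Fin s} (h : 2 ≤ Lcnt x y) (i : Fin n) :
    ∃ j, j ≠ i ∧ x j < y j := by
  obtain ⟨a, ha, b, hb, hab⟩ := Finset.one_lt_card.mp (by omega : 1 < Lcnt x y)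
  simp only [Finset.mem_filter, Finset.mem_univ, true_and] at ha hb
  by_cases hai : a = i
  · exact ⟨b, by rw [← hai]; exact hab.symm, hb⟩
  · exact ⟨a, hai, ha⟩

/-- if `x ≠ y` agree on the three moments `Σ x_i`, `Σ i·x_i`,
`Σ i²·x_i` (coordinates indexed `1,…,n`), then `min(L(x,y), L(y,x)) ≥ 2`; in
particular `L(x,y) ≠ 1` and `L(y,x) ≠ 1`, so the code cut out by the three moment
conditions is an independent set of the guessing graph `G(K_n^+, s)`. -/
theorem stmt17 (n s : ℕ) (hs : 2 ≤ s) (m0 m1 m2 : ℕ)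
    (x y : Fin n → Fin s)
    (hx0 : ∑ i, (x i : ℕ) = m0)
    (hx1 : ∑ i : Fin n, ((i : ℕ) + 1) * (x i : ℕ) = m1)
    (hx2 : ∑ i : Fin n, ((i : ℕ) + 1) ^ 2 * (x i : ℕ) = m2)
    (hy0 : ∑ i, (y i : ℕ) = m0)
    (hy1 : ∑ i : Fin n, ((i : ℕ) + 1) * (y i : ℕ) = m1)
    (hy2 : ∑ i : Fin n, ((i : ℕ) + 1) ^ 2 * (y i : ℕ) = m2)
    (hxy : x ≠ y) :
    2 ≤ min (Lcnt x y) (Lcnt y x) ∧ Lcnt x y ≠ 1 ∧ Lcnt y x ≠ 1 ∧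
    ∃ f : (Fin n → Fin s) → Fin n → Fin s,
      memFposClique f ∧ f x = x ∧ f y = y := by
  have hxyL : 2 ≤ Lcnt x y :=
    key x y (hx0.trans hy0.symm) (hx1.trans hy1.symm) (hx2.trans hy2.symm) hxy
  have hyxL : 2 ≤ Lcnt y x :=
    key y x (hy0.trans hx0.symm) (hy1.trans hx1.symm) (hy2.trans hx2.symm) hxy.symm
  refine ⟨le_min hxyL hyxL, by omega, by omega, ?_⟩
  have hs0 : 0 < s := by omega
  let z0 : Fin s := ⟨0, hs0⟩
  have hz0 : ∀ a : Fin s, z0 ≤ a := fun a => by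
    simp only [Fin.le_def, z0]; omega
  refine ⟨fun w i =>
    max (if ∀ j, j ≠ i → x j ≤ w j then x i else z0)
        (if ∀ j, j ≠ i → y j ≤ w j then y i else z0), ?_, ?_, ?_⟩
  · intro i u v huv
    dsimp only
    apply max_le_max
    · by_cases hu : ∀ j, j ≠ i → x j ≤ u j
      · have hv : ∀ j, j ≠ i → x j ≤ v j := fun j hj => (hu j hj).trans (huv j hj)
        rw [if_pos hu, if_pos hv]
      · simp only [if_neg hu]
        exact hz0 _
    · by_cases hu : ∀ j, j ≠ i → y j ≤ u j
      · have hv : ∀ j, j ≠ i → y j ≤ v j := fun j hj => (hu j hj).trans (huv j hj)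
        rw [if_pos hu, if_pos hv]
      · simp only [if_neg hu]
        exact hz0 _
  · funext i
    dsimp only
    have hfst : (∀ j, j ≠ i → x j ≤ x j) := fun j _ => le_refl _
    rw [if_pos hfst]
    have hsnd : ¬ ∀ j, j ≠ i → y j ≤ x j := by
      intro hcon
      obtain ⟨j, hji, hj⟩ := exists_ne_of_two_le hxyL i
      exact absurd (hcon j hji) (not_le.mpr hj)
    rw [if_neg hsnd]
    exact max_eq_left (hz0 _)
  · funext i
    dsimp only
    have hsnd : (∀ j, j ≠ i → y j ≤ y j) := fun j _ => le_refl _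
    rw [if_pos hsnd]
    have hfst : ¬ ∀ j, j ≠ i → x j ≤ y j := by
      intro hcon
      obtain ⟨j, hji, hj⟩ := exists_ne_of_two_le hyxL i
      exact absurd (hcon j hji) (not_le.mpr hj)
    rw [if_neg hfst]
    exact max_eq_right (hz0 _)
end

section
/- Let 0 ≤ w ≤ n(s−1) and define f : [s]^n → [s]^n by f_i(x) = saturation(w − Σ_{j≠i} x_j), where saturation clamps an integer to [0, s−1]. Then f ∈ F(K_n^-, s) (each f_i is non-increasing in every x_j, j ≠ i) and Fix(f) = B(n,w,s) = {x ∈ [s]^n : Σ_i x_i = w}. -/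
/-- Saturation: clamp an integer to `[0, s−1]`, viewed in `Fin s`. -/
def satur (s : ℕ) (hs : 0 < s) (a : ℤ) : Fin s :=
  ⟨min a.toNat (s - 1), by have := Nat.min_le_right a.toNat (s - 1); omega⟩

/-- The network `f_i(x) = saturation(w − Σ_{j≠i} x_j)` on the negative clique. -/
def negCliqueFun (n s : ℕ) (hs : 0 < s) (w : ℕ)
    (x : Fin n → Fin s) (i : Fin n) : Fin s :=
  satur s hs ((w : ℤ) - ∑ j ∈ Finset.univ.erase i, ((x j : ℕ) : ℤ))

/-- for `0 ≤ w ≤ n(s−1)`, the map `f_i(x) = saturation(w − Σ_{j≠i} x_j)`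
belongs to `F(K_n^-, s)` (each `f_i` is non-increasing in every `x_j`, `j ≠ i`)
and its fixed points are exactly `B(n,w,s) = {x : Σ x_i = w}`. -/
theorem stmt18 (n s w : ℕ) (hs : 2 ≤ s) (hw : w ≤ n * (s - 1)) :
    memFnegClique (fun x => negCliqueFun n s (by omega) w x) ∧
    ∀ x : Fin n → Fin s,
      negCliqueFun n s (by omega) w x = x ↔ ∑ i, (x i : ℕ) = w := by
  have hs0 : 0 < s := by omega
  have erase_sum : ∀ (x : Fin n → Fin s) (i : Fin n),
      ∑ j ∈ Finset.univ.erase i, ((x j : ℕ) : ℤ)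
        = (∑ j, ((x j : ℕ) : ℤ)) - (x i : ℕ) :=
    fun x i => Finset.sum_erase_eq_sub (Finset.mem_univ i)
  constructor
  · intro i x y h
    show satur s hs0 _ ≤ satur s hs0 _
    have hsum : ∑ j ∈ Finset.univ.erase i, ((y j : ℕ) : ℤ)
        ≤ ∑ j ∈ Finset.univ.erase i, ((x j : ℕ) : ℤ) := by
      refine Finset.sum_le_sum fun j hj => ?_
      have := h j (Finset.ne_of_mem_erase hj)
      exact_mod_cast this
    simp only [satur, Fin.mk_le_mk]
    have : ((w : ℤ) - ∑ j ∈ Finset.univ.erase i, ((x j : ℕ) : ℤ)).toNat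
        ≤ ((w : ℤ) - ∑ j ∈ Finset.univ.erase i, ((y j : ℕ) : ℤ)).toNat := by
      apply Int.toNat_le_toNat; omega
    omega
  · intro x
    set S := ∑ i, (x i : ℕ) with hSdef
    have hsumcast : ∑ j, ((x j : ℕ) : ℤ) = (S : ℤ) := by
      rw [hSdef]; push_cast; ring
    constructor
    · intro hfix
      have key : ∀ i : Fin n,
          min ((w : ℤ) - S + (x i : ℕ)).toNat (s - 1) = (x i : ℕ) := by
        intro i
        have := congrFun hfix i
        have hv := congrArg Fin.val this
        simpa [negCliqueFun, satur, erase_sum, hsumcast, sub_add,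
          sub_sub_cancel] using hv
      rcases lt_trichotomy S w with hlt | heq | hgt
      · have hall : ∀ i : Fin n, (x i : ℕ) = s - 1 := by
          intro i
          have := key i
          have hxi : (x i : ℕ) < s := (x i).isLt
          omega
        have : S = n * (s - 1) := by
          rw [hSdef, Finset.sum_congr rfl (fun i _ => hall i)]
          simp [Finset.card_univ, mul_comm]
        omega
      · exact heq
      · have hall : ∀ i : Fin n, (x i : ℕ) = 0 := by
          intro i
          have := key i
          have hxi : (x i : ℕ) < s := (x i).isLt
          omega
        have : S = 0 := by
          rw [hSdef, Finset.sum_congr rfl (fun i _ => hall i)]; simp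
        omega
    · intro hSw
      funext i
      apply Fin.ext
      show min _ _ = _
      rw [erase_sum, hsumcast, hSw]
      have hxi : (x i : ℕ) < s := (x i).isLt
      have : ((w : ℤ) - ((w : ℤ) - (x i : ℕ))).toNat = (x i : ℕ) := by omega
      rw [this]; omega
end
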